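/- arXiv:1601.02421 — 14 statements merged into one kernel-verified Lean document; each statement's English description precedes it below -/
import Mathlib

section
/- Let P be a commutative monoid and S ⊆ P a submonoid, with l : P → S⁻¹P the localization map. Then the preimage under l of the units of S⁻¹P is the smallest face of P containing S. In particular, if S is itself a face of P, then S equals this preimage. -/
/-- A face of a commutative additive monoid `M`: a submonoid (given as a set) such that
`a + b ∈ F` implies `a ∈ F` and `b ∈ F`. -/
def IsFace {M : Type*} [AddCommMonoid M] (F : Set M) : Prop :=
  (0 : M) ∈ F ∧ (∀ a b : M, a ∈ F → b ∈ F → a + b ∈ F) ∧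
    ∀ a b : M, a + b ∈ F → a ∈ F ∧ b ∈ F

/-- if `l : P → S⁻¹P` is the localization of a commutative monoid `P` at a
submonoid `S`, then the preimage under `l` of the units of `S⁻¹P` is the smallest face of `P`
containing `S`; in particular, if `S` is a face, then `S` equals this preimage. -/
theorem localization_units_preimage_is_smallest_face
    {P N : Type*} [AddCommMonoid P] [AddCommMonoid N]
    (S : AddSubmonoid P) (f : S.LocalizationMap N) :
    IsFace (⇑f.toAddMonoidHom ⁻¹' {y : N | IsAddUnit y}) ∧
      (S : Set P) ⊆ ⇑f.toAddMonoidHom ⁻¹' {y : N | IsAddUnit y} ∧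
      (∀ F : Set P, IsFace F → (S : Set P) ⊆ F →
        ⇑f.toAddMonoidHom ⁻¹' {y : N | IsAddUnit y} ⊆ F) ∧
      (IsFace (S : Set P) → (S : Set P) = ⇑f.toAddMonoidHom ⁻¹' {y : N | IsAddUnit y}) := by
  have hSU : (S : Set P) ⊆ ⇑f.toAddMonoidHom ⁻¹' {y : N | IsAddUnit y} := by
    intro s hs
    exact f.map_addUnits ⟨s, hs⟩
  have hface : IsFace (⇑f.toAddMonoidHom ⁻¹' {y : N | IsAddUnit y}) := by
    refine ⟨?_, ?_, ?_⟩
    · show IsAddUnit (f.toAddMonoidHom 0)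
      simp
    · intro a b ha hb
      show IsAddUnit (f.toAddMonoidHom (a + b))
      rw [map_add]
      exact ha.add hb
    · intro a b hab
      have h : IsAddUnit (f.toAddMonoidHom a + f.toAddMonoidHom b) := by
        rw [← map_add]; exact hab
      obtain ⟨c, hc⟩ := h.exists_neg
      constructor
      · exact IsAddUnit.of_add_eq_zero (f.toAddMonoidHom b + c) (by rw [← add_assoc]; exact hc)
      · exact IsAddUnit.of_add_eq_zero (f.toAddMonoidHom a + c)
          (by rw [← add_assoc, add_comm (f.toAddMonoidHom b)]; exact hc)
  have hmin : ∀ F : Set P, IsFace F → (S : Set P) ⊆ F →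
      ⇑f.toAddMonoidHom ⁻¹' {y : N | IsAddUnit y} ⊆ F := by
    intro F hF hSF p hp
    have hp' : IsAddUnit (f.toAddMonoidHom p) := hp
    obtain ⟨u, hu⟩ := hp'.exists_neg
    obtain ⟨⟨x, s⟩, hx⟩ := f.surj u
    have key : f.toAddMonoidHom (p + x) = f.toAddMonoidHom (s : P) := by
      rw [map_add, ← (show u + f.toAddMonoidHom s = f.toAddMonoidHom x from hx), ← add_assoc, hu, zero_add]
    obtain ⟨c, hc⟩ := (f.eq_iff_exists).mp key
    have hmem : (c : P) + (p + x) ∈ F := by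
      rw [hc]
      exact hF.2.1 _ _ (hSF c.2) (hSF s.2)
    exact (hF.2.2 _ _ (hF.2.2 _ _ hmem).2).1
  refine ⟨hface, hSU, hmin, fun hS => ?_⟩
  exact Set.Subset.antisymm hSU (hmin _ hS (subset_refl _))
end

section
/- If P is a finitely generated commutative monoid, then P has only finitely many faces, and every face of P is finitely generated as a monoid. -/
/-- a finitely generated commutative monoid has only finitely many faces,
and each face is finitely generated as a monoid. -/
theorem faces_finite_and_finitely_generated
    {P : Type*} [AddCommMonoid P] [AddMonoid.FG P] :
    {F : Set P | IsFace F}.Finite ∧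
      ∀ F : Set P, IsFace F →
        ∃ T : Finset P, (AddSubmonoid.closure (T : Set P) : Set P) = F := by
  classical
  obtain ⟨S, hS⟩ := (AddMonoid.FG.fg_top : (⊤ : AddSubmonoid P).FG)
  have key : ∀ F : Set P, IsFace F →
      (AddSubmonoid.closure (↑(S.filter (· ∈ F)) : Set P) : Set P) = F := by
    intro F hF
    apply subset_antisymm
    · intro x hx
      refine AddSubmonoid.closure_induction (fun y hy => ?_) hF.1
        (fun a b _ _ ha hb => hF.2.1 a b ha hb) hx
      simp only [Finset.coe_filter, Set.mem_setOf_eq] at hy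
      exact hy.2
    · intro x hxF
      have hx' : x ∈ AddSubmonoid.closure (S : Set P) := by
        rw [hS]; exact AddSubmonoid.mem_top x
      revert hxF
      refine AddSubmonoid.closure_induction (motive := fun y _ => y ∈ F →
          y ∈ AddSubmonoid.closure (↑(S.filter (· ∈ F)) : Set P))
        (fun y hy hyF => ?_) (fun _ => ?_) (fun a b _ _ ha hb hab => ?_) hx'
      · exact AddSubmonoid.subset_closure (by exact Finset.mem_coe.mpr (Finset.mem_filter.mpr ⟨Finset.mem_coe.mp hy, hyF⟩))
      · exact (AddSubmonoid.closure _).zero_mem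
      · obtain ⟨haF, hbF⟩ := hF.2.2 a b hab
        exact (AddSubmonoid.closure _).add_mem (ha haF) (hb hbF)
  constructor
  · have hinj : Set.InjOn (fun F : Set P => S.filter (· ∈ F)) {F | IsFace F} := by
      intro F hF G hG h
      rw [← key F hF, ← key G hG]
      exact congrArg (fun T : Finset P => ((AddSubmonoid.closure (T : Set P) : AddSubmonoid P) : Set P)) h
    have himg : ((fun F : Set P => S.filter (· ∈ F)) '' {F | IsFace F}).Finite :=
      S.powerset.finite_toSet.subset (by
        rintro _ ⟨F, _, rfl⟩
        simp only [Finset.mem_coe, Finset.mem_powerset]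
        exact Finset.filter_subset _ _)
    exact Set.Finite.of_finite_image himg hinj
  · intro F hF
    exact ⟨S.filter (· ∈ F), key F hF⟩
end

section
/- Let h : Q → P be a surjective monoid homomorphism with the property that for any q₁, q₂ ∈ Q with h(q₁) = h(q₂), there exist a positive integer n and a unit u ∈ Q* with n·q₁ = n·q₂ + u. Then for every face F of Q, the image h(F) is a face of P, and F ↦ h(F) is a bijection from the faces of Q to the faces of P, inverse to G ↦ h⁻¹(G). -/
lemma IsFace.unit_mem {M : Type*} [AddCommMonoid M] {F : Set M} (hF : IsFace F)
    {u : M} (hu : IsAddUnit u) : u ∈ F := by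
  obtain ⟨v, hv⟩ := hu.exists_neg
  exact (hF.2.2 u v (by rw [hv]; exact hF.1)).1

lemma IsFace.smul_mem {M : Type*} [AddCommMonoid M] {F : Set M} (hF : IsFace F)
    {q : M} (hq : q ∈ F) (n : ℕ) : n • q ∈ F := by
  induction n with
  | zero => simpa using hF.1
  | succ m ih => rw [succ_nsmul]; exact hF.2.1 _ _ ih hq

lemma IsFace.of_smul_mem {M : Type*} [AddCommMonoid M] {F : Set M} (hF : IsFace F)
    {q : M} {n : ℕ} (hn : 0 < n) (hq : n • q ∈ F) : q ∈ F := by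
  obtain ⟨m, rfl⟩ := Nat.exists_eq_succ_of_ne_zero hn.ne'
  rw [succ_nsmul] at hq
  exact (hF.2.2 _ _ hq).2

/-- if `h : Q → P` is a surjective monoid homomorphism such that whenever
`h q₁ = h q₂` there are `n > 0` and a unit `u` with `n•q₁ = n•q₂ + u`, then images of faces
are faces, and `F ↦ h(F)` is a bijection from faces of `Q` to faces of `P`, inverse to
`G ↦ h⁻¹(G)`. -/
theorem faces_bijection_of_surjective
    {Q P : Type*} [AddCommMonoid Q] [AddCommMonoid P]
    (h : Q →+ P) (hsurj : Function.Surjective h)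
    (H : ∀ q₁ q₂ : Q, h q₁ = h q₂ →
      ∃ n : ℕ, 0 < n ∧ ∃ u : Q, IsAddUnit u ∧ n • q₁ = n • q₂ + u) :
    (∀ F : Set Q, IsFace F → IsFace (⇑h '' F)) ∧
      (∀ F : Set Q, IsFace F → ⇑h ⁻¹' (⇑h '' F) = F) ∧
      ∀ G : Set P, IsFace G → ⇑h '' (⇑h ⁻¹' G) = G := by
  -- key: if h q₁ = h q₂ with q₂ ∈ F, then q₁ ∈ F
  have key : ∀ F : Set Q, IsFace F → ∀ q₁ q₂ : Q, h q₁ = h q₂ → q₂ ∈ F → q₁ ∈ F := by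
    intro F hF q₁ q₂ heq hq₂
    obtain ⟨n, hn, u, hu, hsmul⟩ := H q₁ q₂ heq
    have : n • q₁ ∈ F := hsmul ▸ hF.2.1 _ _ (hF.smul_mem hq₂ n) (hF.unit_mem hu)
    exact hF.of_smul_mem hn this
  refine ⟨?_, ?_, ?_⟩
  · intro F hF
    refine ⟨⟨0, hF.1, map_zero h⟩, ?_, ?_⟩
    · rintro _ _ ⟨a, ha, rfl⟩ ⟨b, hb, rfl⟩
      exact ⟨a + b, hF.2.1 _ _ ha hb, map_add h a b⟩
    · rintro p p' hpp'
      obtain ⟨q, rfl⟩ := hsurj p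
      obtain ⟨q', rfl⟩ := hsurj p'
      obtain ⟨f, hf, hfe⟩ := hpp'
      have : q + q' ∈ F := key F hF _ _ (by rw [map_add, hfe]) hf
      obtain ⟨h1, h2⟩ := hF.2.2 _ _ this
      exact ⟨⟨q, h1, rfl⟩, ⟨q', h2, rfl⟩⟩
  · intro F hF
    ext q
    constructor
    · rintro ⟨f, hf, hfe⟩
      exact key F hF q f hfe.symm hf
    · exact fun hq => ⟨q, hq, rfl⟩
  · intro G _
    exact Set.image_preimage_eq G hsurj
end

section
/- Let Q → P be an injective, dense map of commutative monoids (dense meaning: for every p ∈ P there exist n > 0 and q ∈ Q with n·p equal to the image of q). For a face F of Q, the set F' := { p ∈ P : n·p ∈ F for some positive integer n } is a face of P, and F ↦ F' is a bijection from faces of Q to faces of P, inverse to G ↦ G ∩ Q. -/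
lemma IsFace.nsmul_mem {M : Type*} [AddCommMonoid M] {F : Set M} (hF : IsFace F)
    {a : M} (ha : a ∈ F) (n : ℕ) : n • a ∈ F := by
  induction n with
  | zero => simpa using hF.1
  | succ n ih => rw [succ_nsmul]; exact hF.2.1 _ _ ih ha

lemma IsFace.of_nsmul_mem {M : Type*} [AddCommMonoid M] {F : Set M} (hF : IsFace F)
    {a : M} {n : ℕ} (hn : 0 < n) (ha : n • a ∈ F) : a ∈ F := by
  obtain ⟨m, rfl⟩ := Nat.exists_eq_succ_of_ne_zero hn.ne'
  rw [succ_nsmul] at ha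
  exact (hF.2.2 _ _ ha).2

/-- for an injective dense map `h : Q → P` of commutative monoids, the set
`F' = {p : ∃ n > 0, n•p ∈ h(F)}` is a face of `P` for every face `F` of `Q`, and `F ↦ F'`
is a bijection from faces of `Q` to faces of `P`, inverse to `G ↦ h⁻¹(G)`. -/
theorem dense_injective_faces_bijection
    {Q P : Type*} [AddCommMonoid Q] [AddCommMonoid P]
    (h : Q →+ P) (hinj : Function.Injective h)
    (hdense : ∀ p : P, ∃ n : ℕ, 0 < n ∧ ∃ q : Q, n • p = h q) :
    (∀ F : Set Q, IsFace F →
      IsFace {p : P | ∃ n : ℕ, 0 < n ∧ n • p ∈ ⇑h '' F} ∧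
        ⇑h ⁻¹' {p : P | ∃ n : ℕ, 0 < n ∧ n • p ∈ ⇑h '' F} = F) ∧
      ∀ G : Set P, IsFace G →
        {p : P | ∃ n : ℕ, 0 < n ∧ n • p ∈ ⇑h '' (⇑h ⁻¹' G)} = G := by
  constructor
  · intro F hF
    constructor
    · refine ⟨⟨1, one_pos, 0, hF.1, by simp⟩, ?_, ?_⟩
      · rintro a b ⟨n, hn, qa, hqa, hna⟩ ⟨m, hm, qb, hqb, hmb⟩
        refine ⟨n * m, Nat.mul_pos hn hm, m • qa + n • qb, hF.2.1 _ _
          (hF.nsmul_mem hqa m) (hF.nsmul_mem hqb n), ?_⟩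
        rw [smul_add, map_add, map_nsmul, map_nsmul, hna, hmb,
          ← mul_smul, ← mul_smul, mul_comm m n]
      · rintro a b ⟨n, hn, q, hq, hnab⟩
        obtain ⟨m, hm, qa, hqa⟩ := hdense a
        obtain ⟨m', hm', qb, hqb⟩ := hdense b
        have key : (n * m') • qa + (n * m) • qb = (m * m') • q := by
          apply hinj
          rw [map_add, map_nsmul, map_nsmul, map_nsmul, ← hqa, ← hqb, hnab,
            ← mul_smul, ← mul_smul, ← mul_smul, smul_add]
          congr 2 <;> ring
        have hmem : (n * m') • qa ∈ F ∧ (n * m) • qb ∈ F :=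
          hF.2.2 _ _ (key ▸ hF.nsmul_mem hq (m * m'))
        constructor
        · exact ⟨n * m' * m, by positivity, (n * m') • qa, hmem.1, by
            rw [map_nsmul, ← hqa, ← mul_smul]⟩
        · exact ⟨n * m * m', by positivity, (n * m) • qb, hmem.2, by
            rw [map_nsmul, ← hqb, ← mul_smul]⟩
    · ext q
      simp only [Set.mem_preimage, Set.mem_setOf_eq]
      constructor
      · rintro ⟨n, hn, q', hq', hnq⟩
        rw [← map_nsmul] at hnq
        rw [hinj hnq] at hq'
        exact hF.of_nsmul_mem hn hq'
      · intro hq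
        exact ⟨1, one_pos, q, hq, by simp⟩
  · intro G hG
    ext p
    simp only [Set.mem_setOf_eq]
    constructor
    · rintro ⟨n, hn, q, hq, hnp⟩
      exact hG.of_nsmul_mem hn (hnp ▸ hq)
    · intro hp
      obtain ⟨n, hn, q, hq⟩ := hdense p
      exact ⟨n, hn, q, by rw [Set.mem_preimage, ← hq]; exact hG.nsmul_mem hp n, hq.symm⟩
end

section
/- Let P be a saturated integral commutative monoid and F a face of P. Then F is saturated, the quotient P/F is saturated, and the quotient group Pᵍᵖ/Fᵍᵖ is torsion-free. -/
/-- A commutative monoid is integral if it is cancellative, i.e. if it injects into its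
Grothendieck group. -/
def IsIntegralMonoid (M : Type*) [AddCommMonoid M] : Prop :=
  ∀ a b c : M, a + b = a + c → b = c

/-- An (integral) commutative monoid `M` is saturated if whenever an element `a - b` of its
Grothendieck group has a positive multiple in `M` (i.e. `n•a = n•b + c` for some `c ∈ M`),
it already lies in `M` (i.e. `a = b + d` for some `d ∈ M`). -/
def IsSaturatedMonoid (M : Type*) [AddCommMonoid M] : Prop :=
  ∀ (a b : M) (n : ℕ), 0 < n → (∃ c : M, n • a = n • b + c) → ∃ d : M, a = b + d

/-- The congruence on `P` generated by setting the elements of the submonoid `F` to zero;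
the quotient is `P/F`. -/
def faceCon {P : Type*} [AddCommMonoid P] (F : AddSubmonoid P) : AddCon P where
  r p p' := ∃ f ∈ F, ∃ g ∈ F, p + f = p' + g
  iseqv := by
    refine ⟨fun p => ⟨0, F.zero_mem, 0, F.zero_mem, rfl⟩, ?_, ?_⟩
    · rintro p p' ⟨f, hf, g, hg, e⟩
      exact ⟨g, hg, f, hf, e.symm⟩
    · rintro p p' p'' ⟨f, hf, g, hg, e⟩ ⟨f', hf', g', hg', e'⟩
      refine ⟨f + f', F.add_mem hf hf', g' + g, F.add_mem hg' hg, ?_⟩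
      calc p + (f + f') = p + f + f' := (add_assoc _ _ _).symm
        _ = p' + g + f' := by rw [e]
        _ = p' + f' + g := by rw [add_right_comm]
        _ = p'' + g' + g := by rw [e']
        _ = p'' + (g' + g) := add_assoc _ _ _
  add' := by
    rintro a b c d ⟨f, hf, g, hg, e⟩ ⟨f', hf', g', hg', e'⟩
    refine ⟨f + f', F.add_mem hf hf', g + g', F.add_mem hg hg', ?_⟩
    calc a + c + (f + f') = (a + f) + (c + f') := add_add_add_comm a c f f'
      _ = (b + g) + (d + g') := by rw [e, e']
      _ = b + d + (g + g') := (add_add_add_comm b d g g').symm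

/-- if `P` is a saturated integral commutative monoid and `F` is a face of `P`,
then `F` is saturated, the quotient `P/F` is (integral and) saturated, and `Pᵍᵖ/Fᵍᵖ` is
torsion-free (expressed intrinsically: if `n•(a-b) ∈ Fᵍᵖ` for some `n > 0` then
`a - b ∈ Fᵍᵖ`). -/
theorem face_saturated_quotient_saturated_torsionfree
    {P : Type*} [AddCommMonoid P]
    (hint : IsIntegralMonoid P) (hsat : IsSaturatedMonoid P)
    (F : AddSubmonoid P) (hF : IsFace (F : Set P)) :
    IsSaturatedMonoid F ∧
      (IsIntegralMonoid (faceCon F).Quotient ∧ IsSaturatedMonoid (faceCon F).Quotient) ∧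
      ∀ (a b : P) (n : ℕ), 0 < n →
        (∃ f ∈ F, ∃ g ∈ F, n • a + f = n • b + g) →
        ∃ f' ∈ F, ∃ g' ∈ F, a + f' = b + g' := by
  obtain ⟨h0, hadd, hface⟩ := hF
  -- a positive multiple in the face forces membership in the face
  have hmem : ∀ (d : P) (n : ℕ), 0 < n → n • d ∈ F → d ∈ F := by
    intro d n hn hd
    obtain ⟨m, rfl⟩ := Nat.exists_eq_succ_of_ne_zero hn.ne'
    rw [succ_nsmul] at hd
    exact (hface _ _ hd).2
  -- the torsion-freeness statement, proved first since it implies part 1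
  have key : ∀ (a b : P) (n : ℕ), 0 < n →
      (∃ f ∈ F, ∃ g ∈ F, n • a + f = n • b + g) →
      ∃ f' ∈ F, ∃ g' ∈ F, a + f' = b + g' := by
    rintro a b n hn ⟨f, hf, g, hg, e⟩
    obtain ⟨m, rfl⟩ := Nat.exists_eq_succ_of_ne_zero hn.ne'
    have h1 : (m + 1) • (a + f) = (m + 1) • b + (g + m • f) := by
      calc (m + 1) • (a + f) = ((m + 1) • a + f) + m • f := by
            rw [smul_add, succ_nsmul f m]; abel
        _ = ((m + 1) • b + g) + m • f := by rw [e]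
        _ = (m + 1) • b + (g + m • f) := add_assoc _ _ _
    obtain ⟨d, hd⟩ := hsat (a + f) b (m + 1) hn ⟨_, h1⟩
    have hnd : (m + 1) • d = g + m • f := by
      apply hint ((m + 1) • b)
      rw [← h1, hd, smul_add]
    have hdF : d ∈ F := hmem d (m + 1) hn (hnd ▸ hadd _ _ hg (AddSubmonoid.nsmul_mem F hf m))
    exact ⟨f, hf, d, hdF, hd⟩
  refine ⟨?_, ⟨?_, ?_⟩, key⟩
  · -- F is saturated
    rintro a b n hn ⟨c, hc⟩
    have hc' : n • (a : P) = n • (b : P) + (c : P) := by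
      have := congrArg (Subtype.val) hc
      simpa using this
    obtain ⟨d, hd⟩ := hsat a b n hn ⟨c, hc'⟩
    have hdF : d ∈ F := (hface _ _ (hd ▸ a.2)).2
    exact ⟨⟨d, hdF⟩, Subtype.ext hd⟩
  · -- quotient is integral
    intro x y z
    refine AddCon.induction_on x fun a => AddCon.induction_on y fun b =>
      AddCon.induction_on z fun c h => ?_
    have h' : (faceCon F) (a + b) (a + c) := by
      rw [← AddCon.eq]; exact h
    obtain ⟨f, hf, g, hg, e⟩ := h'
    rw [AddCon.eq]
    refine ⟨f, hf, g, hg, hint a _ _ ?_⟩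
    calc a + (b + f) = a + b + f := (add_assoc _ _ _).symm
      _ = a + c + g := e
      _ = a + (c + g) := add_assoc _ _ _
  · -- quotient is saturated
    rintro x y n hn ⟨z, hz⟩
    revert hz
    refine AddCon.induction_on x fun a => AddCon.induction_on y fun b =>
      AddCon.induction_on z fun c hz => ?_
    obtain ⟨m, rfl⟩ := Nat.exists_eq_succ_of_ne_zero hn.ne'
    have hz' : (faceCon F) ((m + 1) • a) ((m + 1) • b + c) := by
      rw [← AddCon.eq]; exact hz
    obtain ⟨f, hf, g, hg, e⟩ := hz'
    have h1 : (m + 1) • (a + f) = (m + 1) • b + (c + g + m • f) := by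
      calc (m + 1) • (a + f) = ((m + 1) • a + f) + m • f := by
            rw [smul_add, succ_nsmul f m]; abel
        _ = ((m + 1) • b + c + g) + m • f := by rw [e, add_assoc ((m+1)•b) c g]
        _ = (m + 1) • b + (c + g + m • f) := by abel
    obtain ⟨d, hd⟩ := hsat (a + f) b (m + 1) hn ⟨_, h1⟩
    refine ⟨(d : (faceCon F).Quotient), ?_⟩
    have ha : (↑a : (faceCon F).Quotient) = ↑(a + f) := by
      rw [AddCon.eq]; exact ⟨f, hf, 0, F.zero_mem, by rw [add_zero]⟩
    rw [ha, hd]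
    rfl
end

section
/- Let P be a fine monoid (finitely generated and integral) and F a face of P. Then there exists a monoid homomorphism h : P → ℕ with h⁻¹(0) = F. -/
open Matrix Finset

/-! ### Farkas' lemma (Dines' induction) -/

theorem dines_farkas {κ : Type*} [Fintype κ] :
    ∀ (m : ℕ) (a : Fin m → (κ → ℚ)) (b : κ → ℚ),
    (¬ ∃ t : Fin m → ℚ, (∀ i, 0 ≤ t i) ∧ ∑ i, t i • a i = b) →
    ∃ c : κ → ℚ, (∀ i, 0 ≤ a i ⬝ᵥ c) ∧ b ⬝ᵥ c < 0 := by
  intro m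
  induction m with
  | zero =>
    intro a b hne
    refine ⟨-b, fun i => i.elim0, ?_⟩
    have hb : b ≠ 0 := by
      rintro rfl
      exact hne ⟨0, fun i => le_rfl, by simp⟩
    have h1 : 0 ≤ b ⬝ᵥ b := Finset.sum_nonneg fun i _ => mul_self_nonneg _
    have h2 : b ⬝ᵥ b ≠ 0 := by
      intro h
      apply hb
      funext i
      have := (Finset.sum_eq_zero_iff_of_nonneg (fun i _ => mul_self_nonneg (b i))).1 h i (mem_univ i)
      simpa using mul_self_eq_zero.mp this
    have : 0 < b ⬝ᵥ b := lt_of_le_of_ne h1 (Ne.symm h2)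
    simpa [dotProduct_neg] using neg_neg_of_pos this
  | succ m ih =>
    intro a b hne
    set aL := a (Fin.last m) with haL
    have hne' : ¬ ∃ t : Fin m → ℚ, (∀ i, 0 ≤ t i) ∧
        ∑ i, t i • a i.castSucc = b := by
      rintro ⟨t, ht, hsum⟩
      refine hne ⟨Fin.snoc t 0, ?_, ?_⟩
      · intro i
        refine Fin.lastCases ?_ (fun j => ?_) i <;> simp [Fin.snoc_castSucc, ht _]
      · rw [Fin.sum_univ_castSucc]
        simpa [Fin.snoc_castSucc] using hsum
    obtain ⟨c, hc1, hc2⟩ := ih (fun i => a i.castSucc) b hne'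
    by_cases hL : 0 ≤ aL ⬝ᵥ c
    · refine ⟨c, fun i => ?_, hc2⟩
      refine Fin.lastCases ?_ (fun j => ?_) i
      · exact hL
      · exact hc1 j
    push_neg at hL
    set ahat : Fin m → (κ → ℚ) :=
      fun i => a i.castSucc - ((a i.castSucc ⬝ᵥ c) / (aL ⬝ᵥ c)) • aL with hahat
    set bhat : κ → ℚ := b - ((b ⬝ᵥ c) / (aL ⬝ᵥ c)) • aL with hbhat
    have hne'' : ¬ ∃ t : Fin m → ℚ, (∀ i, 0 ≤ t i) ∧ ∑ i, t i • ahat i = bhat := by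
      rintro ⟨t, ht, hsum⟩
      set s : ℚ := (b ⬝ᵥ c) / (aL ⬝ᵥ c) - ∑ i, t i * ((a i.castSucc ⬝ᵥ c) / (aL ⬝ᵥ c)) with hs
      have hspos : 0 ≤ s := by
        have h1 : 0 < (b ⬝ᵥ c) / (aL ⬝ᵥ c) := div_pos_of_neg_of_neg hc2 hL
        have h2 : ∑ i, t i * ((a i.castSucc ⬝ᵥ c) / (aL ⬝ᵥ c)) ≤ 0 := by
          refine Finset.sum_nonpos fun i _ => ?_
          exact mul_nonpos_of_nonneg_of_nonpos (ht i)
            (div_nonpos_of_nonneg_of_nonpos (hc1 i) hL.le)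
        rw [hs]; linarith
      refine hne ⟨Fin.snoc t s, ?_, ?_⟩
      · intro i
        refine Fin.lastCases ?_ (fun j => ?_) i <;> simp [Fin.snoc_castSucc, hspos, ht _]
      · rw [Fin.sum_univ_castSucc]
        simp only [Fin.snoc_castSucc, Fin.snoc_last]
        have expand : ∀ i : Fin m, t i • a i.castSucc =
            t i • ahat i + (t i * ((a i.castSucc ⬝ᵥ c) / (aL ⬝ᵥ c))) • aL := by
          intro i
          rw [hahat]
          simp [smul_sub, smul_smul]
        have hsc : (∑ i, t i * ((a i.castSucc ⬝ᵥ c) / (aL ⬝ᵥ c))) + s = (b ⬝ᵥ c) / (aL ⬝ᵥ c) := by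
          rw [hs]; ring
        calc (∑ i, t i • a i.castSucc) + s • aL
            = (∑ i, (t i • ahat i + (t i * ((a i.castSucc ⬝ᵥ c) / (aL ⬝ᵥ c))) • aL)) + s • aL := by
              rw [Finset.sum_congr rfl fun i _ => expand i]
          _ = (∑ i, t i • ahat i) + ((∑ i, t i * ((a i.castSucc ⬝ᵥ c) / (aL ⬝ᵥ c))) • aL + s • aL) := by
              rw [Finset.sum_add_distrib, ← Finset.sum_smul, add_assoc]
          _ = bhat + ((∑ i, t i * ((a i.castSucc ⬝ᵥ c) / (aL ⬝ᵥ c))) + s) • aL := by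
              rw [hsum, ← add_smul]
          _ = bhat + ((b ⬝ᵥ c) / (aL ⬝ᵥ c)) • aL := by rw [hsc]
          _ = b := by rw [hbhat]; abel
    obtain ⟨d, hd1, hd2⟩ := ih ahat bhat hne''
    have hc0 : aL ⬝ᵥ c ≠ 0 := ne_of_lt hL
    refine ⟨d - ((aL ⬝ᵥ d) / (aL ⬝ᵥ c)) • c, fun i => ?_, ?_⟩
    · refine Fin.lastCases ?_ (fun j => ?_) i
      · rw [← haL, dotProduct_sub, dotProduct_smul, smul_eq_mul, div_mul_cancel₀ _ hc0]
        simp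
      · have hthis := hd1 j
        rw [hahat] at hthis
        simp only [sub_dotProduct, smul_dotProduct, smul_eq_mul] at hthis
        rw [dotProduct_sub, dotProduct_smul, smul_eq_mul]
        have key : a j.castSucc ⬝ᵥ c / (aL ⬝ᵥ c) * (aL ⬝ᵥ d)
            = (aL ⬝ᵥ d) / (aL ⬝ᵥ c) * (a j.castSucc ⬝ᵥ c) := by ring
        linarith
    · rw [dotProduct_sub, dotProduct_smul, smul_eq_mul]
      rw [hbhat] at hd2
      simp only [sub_dotProduct, smul_dotProduct, smul_eq_mul] at hd2
      have key : b ⬝ᵥ c / (aL ⬝ᵥ c) * (aL ⬝ᵥ d)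
          = (aL ⬝ᵥ d) / (aL ⬝ᵥ c) * (b ⬝ᵥ c) := by ring
      linarith

theorem dines_farkas' {κ ι : Type*} [Fintype κ] [Fintype ι] (a : ι → (κ → ℚ)) (b : κ → ℚ)
    (h : ¬ ∃ t : ι → ℚ, (∀ i, 0 ≤ t i) ∧ ∑ i, t i • a i = b) :
    ∃ c : κ → ℚ, (∀ i, 0 ≤ a i ⬝ᵥ c) ∧ b ⬝ᵥ c < 0 := by
  classical
  let eqv := Fintype.equivFin ι
  have h' : ¬ ∃ t : Fin (Fintype.card ι) → ℚ, (∀ i, 0 ≤ t i) ∧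
      ∑ i, t i • a (eqv.symm i) = b := by
    rintro ⟨t, ht, hsum⟩
    refine h ⟨t ∘ eqv, fun i => ht _, ?_⟩
    rw [← hsum]
    exact Fintype.sum_equiv eqv _ _ (fun j => by simp)
  obtain ⟨c, hc1, hc2⟩ := dines_farkas _ (fun i => a (eqv.symm i)) b h'
  refine ⟨c, fun i => ?_, hc2⟩
  simpa using hc1 (eqv i)

/-! ### The combinatorial core: existence of a positive functional -/


/-- The `i`-th standard basis vector in `Fin n → ℚ`. -/
def sing {n : ℕ} (i : Fin n) : Fin n → ℚ := Pi.single i 1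

@[simp] lemma sing_apply {n : ℕ} (i j : Fin n) : sing i j = if j = i then 1 else 0 := by
  simp [sing, Pi.single_apply]

@[simp] lemma sing_dot {n : ℕ} (i : Fin n) (v : Fin n → ℚ) : sing i ⬝ᵥ v = v i := by
  simp [sing, single_dotProduct]

def faceGen {n : ℕ} (A : Fin n → Prop) [DecidablePred A] (T : Finset (Fin n → ℚ)) :
    ((Fin n ⊕ Fin n) ⊕ (T ⊕ T)) → (Fin n ⊕ Unit → ℚ)
  | .inl (.inl i) => Sum.elim (sing i) (fun _ => if A i then 0 else -1)
  | .inl (.inr i) => Sum.elim ((if A i then (-1:ℚ) else 0) • sing i) (fun _ => 0)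
  | .inr (.inl s) => Sum.elim (s : Fin n → ℚ) (fun _ => 0)
  | .inr (.inr s) => Sum.elim (-(s : Fin n → ℚ)) (fun _ => 0)

@[simp] lemma faceGen_ii {n : ℕ} (A : Fin n → Prop) [DecidablePred A] (T : Finset (Fin n → ℚ))
    (i : Fin n) : faceGen A T (.inl (.inl i)) =
      Sum.elim (sing i) (fun _ => if A i then 0 else -1) := rfl
@[simp] lemma faceGen_ir {n : ℕ} (A : Fin n → Prop) [DecidablePred A] (T : Finset (Fin n → ℚ))
    (i : Fin n) : faceGen A T (.inl (.inr i)) =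
      Sum.elim ((if A i then (-1:ℚ) else 0) • sing i) (fun _ => 0) := rfl
@[simp] lemma faceGen_ri {n : ℕ} (A : Fin n → Prop) [DecidablePred A] (T : Finset (Fin n → ℚ))
    (s : T) : faceGen A T (.inr (.inl s)) = Sum.elim (s : Fin n → ℚ) (fun _ => 0) := rfl
@[simp] lemma faceGen_rr {n : ℕ} (A : Fin n → Prop) [DecidablePred A] (T : Finset (Fin n → ℚ))
    (s : T) : faceGen A T (.inr (.inr s)) = Sum.elim (-(s : Fin n → ℚ)) (fun _ => 0) := rfl

lemma elim_dot {n : ℕ} (v : Fin n → ℚ) (r : ℚ) (ct : Fin n ⊕ Unit → ℚ) :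
    Sum.elim v (fun _ => r) ⬝ᵥ ct = v ⬝ᵥ (fun j => ct (Sum.inl j)) + r * ct (Sum.inr ()) := by
  simp [dotProduct, Fintype.sum_sum_type]

lemma sum_single_weight {n : ℕ} (f : Fin n → ℚ) (j : Fin n) :
    ∑ i, f i * sing i j = f j := by
  rw [Finset.sum_eq_single j]
  · simp
  · intro i _ hij
    simp [Ne.symm hij]
  · simp

lemma exists_pos_functional {n : ℕ} (S : Set (Fin n → ℚ)) (A : Fin n → Prop)
    (hS : ∀ y ∈ Submodule.span ℚ S, (∀ i, ¬ A i → 0 ≤ y i) → ∀ i, ¬ A i → y i = 0) :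
    ∃ c : Fin n → ℚ, (∀ d ∈ Submodule.span ℚ S, d ⬝ᵥ c = 0) ∧
      (∀ i, A i → c i = 0) ∧ (∀ i, 0 ≤ c i) ∧ (∀ i, ¬ A i → 0 < c i) := by
  classical
  obtain ⟨T, hT⟩ : (Submodule.span ℚ S).FG := IsNoetherian.noetherian _
  have hinf : ¬ ∃ t : ((Fin n ⊕ Fin n) ⊕ (T ⊕ T)) → ℚ, (∀ k, 0 ≤ t k) ∧
      ∑ k, t k • faceGen A T k = Sum.elim (0 : Fin n → ℚ) (fun _ : Unit => (-1:ℚ)) := by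
    rintro ⟨t, ht, hsum⟩
    set ti : Fin n → ℚ := fun i => t (.inl (.inl i)) with hti
    set ta : Fin n → ℚ := fun i => t (.inl (.inr i)) with hta
    set tp : T → ℚ := fun s => t (.inr (.inl s)) with htp
    set tm : T → ℚ := fun s => t (.inr (.inr s)) with htm
    -- the unit coordinate
    have hunit : ∑ i : Fin n, ti i * (if A i then (0:ℚ) else -1) = -1 := by
      have h0 := congrFun hsum (Sum.inr ())
      rw [Finset.sum_apply] at h0
      simp only [Pi.smul_apply, smul_eq_mul, Fintype.sum_sum_type,
        faceGen_ii, faceGen_ir, faceGen_ri, faceGen_rr, Sum.elim_inr,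
        mul_zero, Finset.sum_const_zero, add_zero] at h0
      exact h0
    have hunit' : ∑ i : Fin n, (if A i then (0:ℚ) else ti i) = 1 := by
      have : ∑ i : Fin n, -(if A i then (0:ℚ) else ti i) = -1 := by
        rw [← hunit]
        refine Finset.sum_congr rfl fun i _ => ?_
        by_cases h : A i <;> simp [h]
      have h2 : -∑ i : Fin n, (if A i then (0:ℚ) else ti i) = -1 := by
        rw [← Finset.sum_neg_distrib]; exact this
      linarith
    have hwit : ∃ i, ¬ A i ∧ 0 < ti i := by
      by_contra hcon
      push_neg at hcon
      have hle : ∑ i : Fin n, (if A i then (0:ℚ) else ti i) ≤ 0 := by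
        refine Finset.sum_nonpos fun i _ => ?_
        by_cases h : A i
        · simp [h]
        · simp only [h, if_false]
          exact hcon i h
      rw [hunit'] at hle; linarith
    -- the `Fin n` coordinates
    have hco : ∀ j, ti j + ta j * (if A j then (-1:ℚ) else 0)
        + (∑ s : T, tp s * (s : Fin n → ℚ) j + ∑ s : T, tm s * (-(s : Fin n → ℚ)) j) = 0 := by
      intro j
      have h0 := congrFun hsum (Sum.inl j)
      rw [Finset.sum_apply] at h0
      simp only [Pi.smul_apply, smul_eq_mul, Fintype.sum_sum_type,
        faceGen_ii, faceGen_ir, faceGen_ri, faceGen_rr, Sum.elim_inl,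
        Pi.smul_apply, smul_eq_mul] at h0
      rw [sum_single_weight ti j] at h0
      have hmid : ∑ i, ta i * ((if A i then (-1:ℚ) else 0) * sing i j)
          = ta j * (if A j then (-1:ℚ) else 0) := by
        have := sum_single_weight (fun i => ta i * (if A i then (-1:ℚ) else 0)) j
        rw [← this]
        refine Finset.sum_congr rfl fun i _ => by ring
      rw [hmid] at h0
      simpa [Sum.elim_inl] using h0
    set y : Fin n → ℚ := fun j => ti j + ta j * (if A j then (-1:ℚ) else 0) with hy
    have hyW : y ∈ Submodule.span ℚ S := by
      have hyeq : y = -(∑ s : T, (tp s - tm s) • (s : Fin n → ℚ)) := by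
        funext j
        have := hco j
        simp only [Pi.neg_apply, Finset.sum_apply, Pi.smul_apply, smul_eq_mul]
        have hexp : ∑ s : T, (tp s - tm s) * (s : Fin n → ℚ) j
            = ∑ s : T, tp s * (s : Fin n → ℚ) j - ∑ s : T, tm s * (s : Fin n → ℚ) j := by
          rw [← Finset.sum_sub_distrib]
          exact Finset.sum_congr rfl fun s _ => by ring
        rw [hexp]
        simp only [Pi.neg_apply, mul_neg] at this
        rw [Finset.sum_neg_distrib] at this
        simp only [hy]
        linarith
      rw [hyeq]
      refine Submodule.neg_mem _ ?_
      have hsub : (↑T : Set (Fin n → ℚ)) ⊆ (Submodule.span ℚ S : Set (Fin n → ℚ)) := by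
        rw [← hT]
        exact Submodule.subset_span
      refine Submodule.sum_mem _ fun s _ => Submodule.smul_mem _ _ (hsub s.2)
    have hynn : ∀ i, ¬ A i → 0 ≤ y i := by
      intro i hi
      rw [hy]
      simp only [hi, if_false, mul_zero, add_zero]
      exact ht _
    obtain ⟨b0, hb0, hb0p⟩ := hwit
    have hy0 := hS y hyW hynn b0 hb0
    rw [hy] at hy0
    simp only [hb0, if_false, mul_zero, add_zero] at hy0
    rw [hy0] at hb0p
    exact lt_irrefl _ hb0p
  obtain ⟨ct, hct1, hct2⟩ := dines_farkas' _ _ hinf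
  set c : Fin n → ℚ := fun j => ct (Sum.inl j) with hc
  set s0 : ℚ := ct (Sum.inr ()) with hs0
  have hs0pos : 0 < s0 := by
    rw [elim_dot] at hct2
    simpa using hct2
  have hrow1 : ∀ i, 0 ≤ c i + (if A i then (0:ℚ) else -1) * s0 := by
    intro i
    have := hct1 (.inl (.inl i))
    rw [faceGen_ii, elim_dot, sing_dot] at this
    exact this
  have hrow2 : ∀ i, 0 ≤ (if A i then (-1:ℚ) else 0) * c i := by
    intro i
    have := hct1 (.inl (.inr i))
    rw [faceGen_ir, elim_dot, smul_dotProduct, sing_dot, smul_eq_mul] at this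
    simpa using this
  have hrowT : ∀ s : T, (s : Fin n → ℚ) ⬝ᵥ c = 0 := by
    intro s
    have h1 := hct1 (.inr (.inl s))
    have h2 := hct1 (.inr (.inr s))
    rw [faceGen_ri, elim_dot] at h1
    rw [faceGen_rr, elim_dot, neg_dotProduct] at h2
    simp only [mul_zero, add_zero, zero_mul] at h1 h2
    have : (s : Fin n → ℚ) ⬝ᵥ c ≤ 0 := by linarith
    have h1' : 0 ≤ (s : Fin n → ℚ) ⬝ᵥ c := by simpa using h1
    linarith
  have hA : ∀ i, A i → c i = 0 := by
    intro i hi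
    have h1 := hrow1 i
    have h2 := hrow2 i
    simp only [hi, if_true, zero_mul, add_zero, neg_one_mul] at h1 h2
    linarith
  have hpos : ∀ i, ¬ A i → 0 < c i := by
    intro i hi
    have h1 := hrow1 i
    simp only [hi, if_false, neg_one_mul] at h1
    linarith
  have hnn : ∀ i, 0 ≤ c i := by
    intro i
    by_cases h : A i
    · rw [hA i h]
    · exact (hpos i h).le
  refine ⟨c, ?_, hA, hnn, hpos⟩
  intro d hd
  rw [← hT] at hd
  refine Submodule.span_induction ?_ ?_ ?_ ?_ hd
  · intro x hx
    obtain ⟨s, hsT⟩ : ∃ s : T, (s : Fin n → ℚ) = x := ⟨⟨x, hx⟩, rfl⟩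
    rw [← hsT]
    exact hrowT s
  · simp
  · intro x z _ _ hx hz
    rw [add_dotProduct, hx, hz, add_zero]
  · intro a x _ hx
    rw [smul_dotProduct, hx, smul_zero]

/-! ### Monoid setup -/

section Setup
variable {P : Type*} [AddCommMonoid P]

/-- The canonical hom from `Fin n → ℕ` sending `x` to `∑ i, x i • e i`. -/
def genHom {n : ℕ} (e : Fin n → P) : (Fin n → ℕ) →+ P where
  toFun := fun x => ∑ i, x i • e i
  map_zero' := by simp
  map_add' := by intro x y; simp [add_smul, Finset.sum_add_distrib]

lemma genHom_single {n : ℕ} (e : Fin n → P) (i : Fin n) :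
    genHom e (Pi.single i 1) = e i := by
  unfold genHom
  simp only [AddMonoidHom.coe_mk, ZeroHom.coe_mk]
  rw [Finset.sum_eq_single i]
  · simp
  · intro j _ hj; simp [Pi.single_apply, hj]
  · simp

lemma genHom_surjective {n : ℕ} (e : Fin n → P)
    (he : AddSubmonoid.closure (Set.range e) = ⊤) :
    Function.Surjective (genHom e) := by
  intro p
  have hp : p ∈ AddSubmonoid.closure (Set.range e) := by rw [he]; trivial
  have hle : AddSubmonoid.closure (Set.range e) ≤ AddMonoidHom.mrange (genHom e) := by
    rw [AddSubmonoid.closure_le]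
    rintro s ⟨i, rfl⟩
    exact ⟨Pi.single i 1, genHom_single e i⟩
  exact hle hp

lemma face_nsmul {F : Set P} (hF : IsFace F) : ∀ (k : ℕ) (f : P), f ∈ F → k • f ∈ F := by
  intro k f hf
  induction k with
  | zero => simpa using hF.1
  | succ k ihk => rw [succ_nsmul]; exact hF.2.1 _ _ ihk hf

lemma face_genHom_mem {F : Set P} {n : ℕ} (e : Fin n → P) (hF : IsFace F) (x : Fin n → ℕ)
    (hx : ∀ i, x i ≠ 0 → e i ∈ F) : genHom e x ∈ F := by
  show ∑ i, x i • e i ∈ F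
  refine Finset.sum_induction _ (· ∈ F) hF.2.1 hF.1 ?_
  intro i _
  by_cases h : x i = 0
  · simp [h, hF.1]
  · exact face_nsmul hF _ _ (hx i h)

lemma face_genHom_split {F : Set P} {n : ℕ} (e : Fin n → P) (hF : IsFace F) (x : Fin n → ℕ)
    (hx : genHom e x ∈ F) : ∀ i, x i ≠ 0 → e i ∈ F := by
  intro i hi
  classical
  have h1 : x i • e i ∈ F := by
    have heq : genHom e x = x i • e i + ∑ j ∈ univ.erase i, x j • e j :=
      (Finset.add_sum_erase _ _ (mem_univ i)).symm
    exact (hF.2.2 _ _ (heq ▸ hx)).1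
  obtain ⟨k, hk⟩ := Nat.exists_eq_succ_of_ne_zero hi
  rw [hk, succ_nsmul] at h1
  exact (hF.2.2 _ _ h1).2

variable {n : ℕ} (π : (Fin n → ℕ) →+ P)

/-- The set of rational difference vectors of relations of `π`. -/
def relSet (π : (Fin n → ℕ) →+ P) : Set (Fin n → ℚ) :=
  {d | ∃ x y : Fin n → ℕ, π x = π y ∧ d = fun i => (x i : ℚ) - (y i : ℚ)}

lemma relSet_zero : (0 : Fin n → ℚ) ∈ relSet π :=
  ⟨0, 0, rfl, by funext i; simp⟩

lemma relSet_add {d₁ d₂ : Fin n → ℚ} (h₁ : d₁ ∈ relSet π) (h₂ : d₂ ∈ relSet π) :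
    d₁ + d₂ ∈ relSet π := by
  obtain ⟨x₁, y₁, hxy₁, rfl⟩ := h₁
  obtain ⟨x₂, y₂, hxy₂, rfl⟩ := h₂
  exact ⟨x₁ + x₂, y₁ + y₂, by rw [map_add, map_add, hxy₁, hxy₂],
    by funext i; simp; ring⟩

lemma relSet_neg {d : Fin n → ℚ} (h : d ∈ relSet π) : -d ∈ relSet π := by
  obtain ⟨x, y, hxy, rfl⟩ := h
  exact ⟨y, x, hxy.symm, by funext i; simp⟩

lemma relSet_nsmul (k : ℕ) {d : Fin n → ℚ} (h : d ∈ relSet π) :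
    (k : ℚ) • d ∈ relSet π := by
  obtain ⟨x, y, hxy, rfl⟩ := h
  refine ⟨k • x, k • y, by rw [map_nsmul, map_nsmul, hxy], ?_⟩
  funext i
  simp [Pi.smul_apply, smul_eq_mul]
  push_cast
  ring

lemma relSet_zsmul (z : ℤ) {d : Fin n → ℚ} (h : d ∈ relSet π) :
    (z : ℚ) • d ∈ relSet π := by
  obtain ⟨k, rfl | rfl⟩ := z.eq_nat_or_neg
  · exact_mod_cast relSet_nsmul π k h
  · have := relSet_nsmul π k (relSet_neg π h)
    push_cast
    rw [neg_smul, ← smul_neg]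
    exact_mod_cast this

lemma relSet_span_clear {w : Fin n → ℚ} (hw : w ∈ Submodule.span ℚ (relSet π)) :
    ∃ M : ℕ, 0 < M ∧ (M : ℚ) • w ∈ relSet π := by
  refine Submodule.span_induction ?_ ?_ ?_ ?_ hw
  · intro d hd
    exact ⟨1, one_pos, by simpa using hd⟩
  · exact ⟨1, one_pos, by simpa using relSet_zero π⟩
  · rintro w₁ w₂ _ _ ⟨M₁, hM₁, h₁⟩ ⟨M₂, hM₂, h₂⟩
    refine ⟨M₁ * M₂, Nat.mul_pos hM₁ hM₂, ?_⟩
    have : ((M₁ * M₂ : ℕ) : ℚ) • (w₁ + w₂)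
        = (M₂ : ℚ) • ((M₁ : ℚ) • w₁) + (M₁ : ℚ) • ((M₂ : ℚ) • w₂) := by
      push_cast
      rw [smul_smul, smul_smul, smul_add]
      ring_nf
    rw [this]
    exact relSet_add π (relSet_nsmul π M₂ h₁) (relSet_nsmul π M₁ h₂)
  · rintro q w _ ⟨M, hM, h⟩
    refine ⟨q.den * M, Nat.mul_pos q.pos hM, ?_⟩
    have key : ((q.den * M : ℕ) : ℚ) • (q • w) = (q.num : ℚ) • ((M : ℚ) • w) := by
      push_cast
      rw [smul_smul, smul_smul]
      congr 1
      rw [mul_comm (q.den : ℚ) (M : ℚ), mul_assoc, mul_comm (q.den : ℚ) q, Rat.mul_den_eq_num]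
      ring
    rw [key]
    exact relSet_zsmul π q.num h

end Setup

/-! ### Main theorem -/

/-- if `P` is a fine monoid (finitely generated and cancellative, i.e.
injecting into its Grothendieck group) and `F` is a face of `P`, then there is a monoid
homomorphism `h : P → ℕ` with `h⁻¹(0) = F`. -/
theorem fine_monoid_face_eq_preimage_zero
    {P : Type*} [AddCommMonoid P] [AddMonoid.FG P]
    (hint : ∀ a b c : P, a + b = a + c → b = c)
    (F : Set P) (hF : IsFace F) :
    ∃ h : P →+ ℕ, ⇑h ⁻¹' {0} = F := by
  classical
  -- choose generators
  obtain ⟨Sg, hSg⟩ : ∃ Sg : Finset P, AddSubmonoid.closure (↑Sg : Set P) = ⊤ :=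
    AddMonoid.FG.fg_top
  set n := Sg.card with hn
  set e : Fin n → P := fun i => ((Sg.equivFin.symm i : P)) with he
  have hrange : Set.range e = (↑Sg : Set P) := by
    ext p
    constructor
    · rintro ⟨i, rfl⟩; exact (Sg.equivFin.symm i).2
    · intro hp; exact ⟨Sg.equivFin ⟨p, hp⟩, by simp [he]⟩
  have hclos : AddSubmonoid.closure (Set.range e) = ⊤ := by rw [hrange]; exact hSg
  set π : (Fin n → ℕ) →+ P := genHom e with hπ
  have hsur : Function.Surjective π := genHom_surjective e hclos
  -- the face predicate on generators
  set A : Fin n → Prop := fun i => e i ∈ F with hA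
  -- the no-certificate hypothesis
  have hS : ∀ y ∈ Submodule.span ℚ (relSet π), (∀ i, ¬ A i → 0 ≤ y i) →
      ∀ i, ¬ A i → y i = 0 := by
    intro y hy hynn i hiB
    by_contra hne0
    have hypos : 0 < y i := lt_of_le_of_ne (hynn i hiB) (Ne.symm hne0)
    obtain ⟨M, hM, x, y₀, hπxy, hMy⟩ : ∃ M : ℕ, 0 < M ∧ ∃ x y₀ : Fin n → ℕ,
        π x = π y₀ ∧ (M : ℚ) • y = fun j => (x j : ℚ) - (y₀ j : ℚ) := by
      obtain ⟨M, hM, hmem⟩ := relSet_span_clear π hy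
      obtain ⟨x, y₀, h1, h2⟩ := hmem
      exact ⟨M, hM, x, y₀, h1, h2⟩
    set z : Fin n → ℤ := fun j => (x j : ℤ) - (y₀ j : ℤ) with hz
    have hzQ : ∀ j, (z j : ℚ) = (M : ℚ) * y j := by
      intro j
      have := congrFun hMy j
      rw [Pi.smul_apply, smul_eq_mul] at this
      rw [hz]
      push_cast
      linarith [this]
    have hzB : ∀ j, ¬ A j → 0 ≤ z j := by
      intro j hj
      have h1 : (0:ℚ) ≤ (M : ℚ) * y j :=
        mul_nonneg (by positivity) (hynn j hj)
      have := hzQ j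
      exact_mod_cast this ▸ h1
    set zp : Fin n → ℕ := fun j => (z j).toNat with hzp
    set zm : Fin n → ℕ := fun j => (-(z j)).toNat with hzm
    have hxy : x + zm = y₀ + zp := by
      funext j
      have : z j = (x j : ℤ) - (y₀ j : ℤ) := rfl
      simp only [Pi.add_apply, hzm, hzp]
      omega
    have hπeq : π x + π zm = π y₀ + π zp := by
      rw [← map_add, ← map_add, hxy]
    rw [hπxy] at hπeq
    have hzmzp : π zm = π zp := hint (π y₀) _ _ hπeq
    have hzmF : π zm ∈ F := by
      refine face_genHom_mem e hF zm ?_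
      intro j hj
      by_contra hjF
      have h0 : 0 ≤ z j := hzB j hjF
      have : zm j = 0 := by simp only [hzm]; omega
      exact hj this
    have hzpF : π zp ∈ F := hzmzp ▸ hzmF
    have hzpi : zp i ≠ 0 := by
      have h1 : (0:ℚ) < (M : ℚ) * y i := by positivity
      have h2 : 0 < z i := by
        have := hzQ i
        exact_mod_cast this ▸ h1
      simp only [hzp]
      omega
    exact hiB (face_genHom_split e hF zp hzpF i hzpi)
  obtain ⟨c, hcW, hcA, hcnn, hcpos⟩ := exists_pos_functional (relSet π) A hS
  -- clear denominators
  set D : ℕ := ∏ i, (c i).den with hD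
  have hDpos : 0 < D := Finset.prod_pos fun i _ => (c i).pos
  set N : Fin n → ℕ := fun i => (D / (c i).den) * (c i).num.toNat with hN
  have hNQ : ∀ i, (N i : ℚ) = (D : ℚ) * c i := by
    intro i
    obtain ⟨m, hm⟩ := Finset.dvd_prod_of_mem (fun i => (c i).den) (mem_univ i)
    have hdiv : D / (c i).den = m := by rw [hD, hm, Nat.mul_div_cancel_left _ (c i).pos]
    have hnum : ((c i).num.toNat : ℚ) = ((c i).num : ℚ) := by
      have := Int.toNat_of_nonneg (Rat.num_nonneg.2 (hcnn i))
      exact_mod_cast congrArg (Int.cast : ℤ → ℚ) this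
    have hden : ((c i).den : ℚ) * c i = ((c i).num : ℚ) := by
      rw [mul_comm]; exact_mod_cast Rat.mul_den_eq_num (c i)
    rw [hN]
    push_cast [hdiv, hnum]
    rw [hD, hm]
    push_cast
    rw [mul_comm ((c i).den : ℚ) (m:ℚ), mul_assoc, hden]
  -- the weight function
  set ω : (Fin n → ℕ) → ℕ := fun x => ∑ i, x i * N i with hω
  have hωπ : ∀ x x' : Fin n → ℕ, π x = π x' → ω x = ω x' := by
    intro x x' hxx
    have hd : (fun i => (x i : ℚ) - (x' i : ℚ)) ∈ relSet π := ⟨x, x', hxx, rfl⟩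
    have hdot : (fun i => (x i : ℚ) - (x' i : ℚ)) ⬝ᵥ c = 0 :=
      hcW _ (Submodule.subset_span hd)
    have hsums : ∑ i, (x i : ℚ) * c i = ∑ i, (x' i : ℚ) * c i := by
      unfold dotProduct at hdot
      have : ∑ i, ((x i : ℚ) * c i - (x' i : ℚ) * c i) = 0 := by
        rw [← hdot]
        exact Finset.sum_congr rfl fun i _ => by ring
      rw [Finset.sum_sub_distrib] at this
      linarith
    have hcast : ∀ x'' : Fin n → ℕ, ((ω x'' : ℕ) : ℚ) = (D:ℚ) * ∑ i, (x'' i : ℚ) * c i := by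
      intro x''
      rw [hω]
      push_cast
      rw [Finset.mul_sum]
      refine Finset.sum_congr rfl fun i _ => ?_
      rw [hNQ i]; ring
    have : ((ω x : ℕ) : ℚ) = ((ω x' : ℕ) : ℚ) := by rw [hcast, hcast, hsums]
    exact_mod_cast this
  -- the homomorphism
  set xc : P → (Fin n → ℕ) := fun p => (hsur p).choose with hxc
  have hxcπ : ∀ p, π (xc p) = p := fun p => (hsur p).choose_spec
  refine ⟨{ toFun := fun p => ω (xc p)
            map_zero' := ?_
            map_add' := ?_ }, ?_⟩
  · show ω (xc 0) = 0
    have h0 : π (xc 0) = π 0 := by rw [hxcπ, map_zero]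
    rw [hωπ _ _ h0]
    simp [hω]
  · intro p q
    show ω (xc (p + q)) = ω (xc p) + ω (xc q)
    have h0 : π (xc (p + q)) = π (xc p + xc q) := by
      rw [map_add, hxcπ, hxcπ, hxcπ]
    rw [hωπ _ _ h0]
    simp only [hω, Pi.add_apply, add_mul, Finset.sum_add_distrib]
  · ext p
    simp only [Set.mem_preimage, Set.mem_singleton_iff, AddMonoidHom.coe_mk, ZeroHom.coe_mk]
    constructor
    · intro hp
      have hterm : ∀ i, xc p i * N i = 0 := by
        intro i
        exact (Finset.sum_eq_zero_iff.1 hp) i (mem_univ i)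
      have : π (xc p) ∈ F := by
        refine face_genHom_mem e hF _ ?_
        intro i hi
        by_contra hiF
        have hNi : N i = 0 := by
          rcases Nat.mul_eq_zero.1 (hterm i) with h | h
          · exact absurd h hi
          · exact h
        have : (0:ℚ) < (D:ℚ) * c i := by
          have := hcpos i hiF
          positivity
        rw [← hNQ i, hNi] at this
        simp at this
      rwa [hxcπ] at this
    · intro hp
      have hsplit : ∀ i, xc p i ≠ 0 → e i ∈ F :=
        face_genHom_split e hF (xc p) (by rwa [hxcπ])
      refine Finset.sum_eq_zero fun i _ => ?_
      by_cases h : xc p i = 0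
      · rw [h, zero_mul]
      · have hci : c i = 0 := hcA i (hsplit i h)
        have : (N i : ℚ) = 0 := by rw [hNQ i, hci, mul_zero]
        have : N i = 0 := by exact_mod_cast this
        rw [this, mul_zero]
end

section
/- For any exact sequence 0 → A → B → C → 0 of finitely generated abelian groups, there exists an injective group homomorphism A → A' with finite cokernel such that the sequence 0 → A' → B' → C → 0 obtained by pushing out along A → A' splits. -/
/-- for any short exact sequence `0 → A → B → C → 0` of finitely generated
abelian groups there is an injective homomorphism `j : A → A'` with finite cokernel such
that the pushout sequence `0 → A' → B' → C → 0` splits, where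
`B' = (B × A')/{(f a, -j a)}` and splitting is witnessed by a retraction of `A' → B'`. -/
theorem exists_finite_cokernel_pushout_splits
    {A B C : Type} [AddCommGroup A] [AddCommGroup B] [AddCommGroup C]
    [AddGroup.FG A] [AddGroup.FG B] [AddGroup.FG C]
    (f : A →+ B) (g : B →+ C)
    (hf : Function.Injective f) (hg : Function.Surjective g)
    (hexact : f.range = g.ker) :
    ∃ (A' : AddCommGrpCat.{0}) (j : A →+ A'),
      Function.Injective j ∧
      Finite (A' ⧸ j.range) ∧
      ∃ r : (B × A') ⧸ (f.prod (-j)).range →+ A',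
        r.comp ((QuotientAddGroup.mk' ((f.prod (-j)).range)).comp (AddMonoidHom.inr B A')) =
          AddMonoidHom.id A' := by
  classical
  set B₀ : AddSubgroup B := (AddCommGroup.torsion C).comap g with hB₀
  have hmem : ∀ b : B, b ∈ B₀ ↔ IsOfFinAddOrder (g b) := fun b => Iff.rfl
  have hker : ∀ b : B, g b = 0 ↔ b ∈ f.range := by
    intro b; rw [hexact]; rfl
  have hfB₀ : ∀ a : A, f a ∈ B₀ := by
    intro a
    have h0 : g (f a) = 0 := (hker (f a)).2 ⟨a, rfl⟩
    rw [hmem, h0]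
    exact IsOfFinAddOrder.zero
  -- the quotient B ⧸ B₀ is torsion-free
  have htf : ∀ ⦃q : B ⧸ B₀⦄, q ≠ 0 → ¬ IsOfFinAddOrder q := by
    intro q hq hfin
    apply hq
    obtain ⟨b, rfl⟩ := QuotientAddGroup.mk_surjective q
    obtain ⟨n, hn, hnb⟩ := (isOfFinAddOrder_iff_nsmul_eq_zero).1 hfin
    have : (n • b : B) ∈ B₀ := by
      rwa [← QuotientAddGroup.eq_zero_iff, QuotientAddGroup.mk_nsmul]
    rw [hmem, map_nsmul] at this
    have : IsOfFinAddOrder (g b) := this.of_nsmul hn.ne'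
    rw [QuotientAddGroup.eq_zero_iff]
    exact (hmem b).2 this
  -- freeness / projectivity of the quotient
  have : IsAddTorsionFree (B ⧸ B₀) := IsAddTorsionFree.of_not_isOfFinAddOrder htf
  have hfgB : Module.Finite ℤ B := Module.Finite.iff_addGroup_fg.mpr ‹AddGroup.FG B›
  have hfgQ : Module.Finite ℤ (B ⧸ B₀) :=
    Module.Finite.of_surjective
      ((QuotientAddGroup.mk' B₀).toIntLinearMap) (QuotientAddGroup.mk_surjective)
  have hfree : Module.Free ℤ (B ⧸ B₀) := Module.free_of_finite_type_torsion_free'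
  -- get a linear section s of the projection π
  obtain ⟨s, hs⟩ := Module.projective_lifting_property
    ((QuotientAddGroup.mk' B₀).toIntLinearMap) (LinearMap.id (M := B ⧸ B₀))
    (QuotientAddGroup.mk_surjective)
  -- retraction ρ : B →+ B₀
  have hρmem : ∀ b : B, b - s ((QuotientAddGroup.mk' B₀) b) ∈ B₀ := by
    intro b
    apply (QuotientAddGroup.eq_zero_iff _).1
    have h := congrArg (fun t => t ((QuotientAddGroup.mk' B₀) b)) hs
    simp only [LinearMap.comp_apply, LinearMap.id_apply,
      AddMonoidHom.coe_toIntLinearMap] at h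
    calc ((b - s ((QuotientAddGroup.mk' B₀) b) : B) : B ⧸ B₀)
        = (QuotientAddGroup.mk' B₀) (b - s ((QuotientAddGroup.mk' B₀) b)) := rfl
      _ = (QuotientAddGroup.mk' B₀) b - (QuotientAddGroup.mk' B₀) (s ((QuotientAddGroup.mk' B₀) b)) := map_sub _ _ _
      _ = 0 := by rw [h, sub_self]
  let ρ : B →+ B₀ :=
    { toFun := fun b => ⟨b - s ((QuotientAddGroup.mk' B₀) b), hρmem b⟩
      map_zero' := by ext; simp
      map_add' := by intro x y; ext; simp [add_sub_add_comm] }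
  have hρ_fix : ∀ b ∈ B₀, (ρ b : B) = b := by
    intro b hb
    have h0 : (QuotientAddGroup.mk' B₀) b = 0 := (QuotientAddGroup.eq_zero_iff b).2 hb
    show b - s ((QuotientAddGroup.mk' B₀) b) = b
    rw [h0, map_zero, sub_zero]
  -- construct j
  let j : A →+ B₀ := f.codRestrict B₀ hfB₀
  have hjinj : Function.Injective j := by
    intro x y hxy
    apply hf
    exact congrArg Subtype.val hxy
  -- finite cokernel
  have hFGB₀ : AddGroup.FG B₀ := by
    have : Module.Finite ℤ (AddSubgroup.toIntSubmodule B₀) :=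
      Module.Finite.iff_fg.mpr (IsNoetherian.noetherian _)
    exact Module.Finite.iff_addGroup_fg.mp this
  have hfin : Finite (B₀ ⧸ j.range) := by
    have : AddGroup.FG (B₀ ⧸ j.range) := inferInstance
    refine AddCommGroup.finite_of_fg_torsion _ ?_
    intro q
    obtain ⟨⟨b, hb⟩, rfl⟩ := QuotientAddGroup.mk_surjective q
    obtain ⟨n, hn, hnb⟩ := (isOfFinAddOrder_iff_nsmul_eq_zero).1 ((hmem b).1 hb)
    rw [isOfFinAddOrder_iff_nsmul_eq_zero]
    refine ⟨n, hn, ?_⟩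
    rw [← QuotientAddGroup.mk_nsmul, QuotientAddGroup.eq_zero_iff]
    have : g (n • b) = 0 := by rw [map_nsmul]; exact hnb
    obtain ⟨a, ha⟩ := (hker (n • b)).1 this
    exact ⟨a, by ext; simp [j, ha]⟩
  refine ⟨AddCommGrpCat.of B₀, j, hjinj, hfin, ?_⟩
  -- the retraction r
  let r₀ : B × B₀ →+ B₀ := ρ.comp (AddMonoidHom.fst B B₀) + AddMonoidHom.snd B B₀
  have hr₀ : ∀ x ∈ (f.prod (-j)).range, r₀ x = 0 := by
    rintro x ⟨a, rfl⟩
    have h1 : (ρ (f a) : B) = f a := hρ_fix _ (hfB₀ a)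
    have h2 : r₀ ((f.prod (-j)) a) = ρ (f a) + (-(j a)) := rfl
    rw [h2]
    ext
    push_cast
    rw [h1]
    show f a + -(f a) = 0
    simp
  refine ⟨QuotientAddGroup.lift _ r₀ hr₀, ?_⟩
  ext x
  show ((r₀ (0, x) : B₀) : B) = (x : B)
  simp [r₀]
end

section
/- Let B be an abelian group and p a prime number or zero, with 𝔽_p the prime field of characteristic p. Then for every nonzero reduced 𝔽_p-algebra A, the group algebra A[B] is reduced if and only if B contains no element of order p. In particular A[B] is reduced whenever B is torsion-free or p = 0. -/
open Polynomial in
private lemma exists_nontrivial_root_of_unity (K : Type) [Field K] [IsAlgClosed K]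
    {n : ℕ} (hn : 2 ≤ n) (hK : (n : K) ≠ 0) :
    ∃ ζ : K, ζ ^ n = 1 ∧ ζ ≠ 1 := by
  set g : K[X] := ∑ i ∈ Finset.range n, X ^ i with hg
  have hcoeff : ∀ k : ℕ, g.coeff k = if k < n then 1 else 0 := by
    intro k
    rw [hg, Polynomial.finset_sum_coeff]
    simp only [Polynomial.coeff_X_pow]
    rw [Finset.sum_ite_eq (Finset.range n) k (fun _ => (1 : K))]
    simp [Finset.mem_range]
  have hdeg : g.degree ≠ 0 := by
    intro h0
    have h1 : g.coeff 1 = 0 := Polynomial.coeff_eq_zero_of_degree_lt (by rw [h0]; norm_num)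
    rw [hcoeff 1, if_pos (by omega)] at h1
    exact one_ne_zero h1
  obtain ⟨ζ, hζ⟩ := IsAlgClosed.exists_root g hdeg
  have heval : ∑ i ∈ Finset.range n, ζ ^ i = 0 := by
    have := hζ
    simpa [hg, Polynomial.IsRoot, Polynomial.eval_finset_sum] using this
  refine ⟨ζ, ?_, ?_⟩
  · have := geom_sum_mul ζ n
    rw [heval, zero_mul] at this
    exact sub_eq_zero.mp this.symm
  · rintro rfl
    simp only [one_pow, Finset.sum_const, Finset.card_range, nsmul_eq_mul, mul_one] at heval
    exact hK heval


private lemma exists_character (K : Type) [Field K] [IsAlgClosed K] {B : Type} [AddCommGroup B]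
    (hord : ∀ c : B, addOrderOf c ≠ 0 → (addOrderOf c : K) ≠ 0)
    {c : B} (hc : c ≠ 0) :
    ∃ χ : Multiplicative B →* Kˣ, χ (Multiplicative.ofAdd c) ≠ 1 := by
  classical
  obtain ⟨u, hu1, hu⟩ : ∃ u : Kˣ, u ≠ 1 ∧ ∀ m : ℤ, m • c = 0 → u ^ m = 1 := by
    rcases eq_or_ne (addOrderOf c) 0 with h0 | h0
    · obtain ⟨a, ha⟩ := Infinite.exists_notMem_finset ({0, 1} : Finset K)
      simp only [Finset.mem_insert, Finset.mem_singleton, not_or] at ha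
      refine ⟨Units.mk0 a ha.1, by simpa [Units.ext_iff] using ha.2, fun m hm => ?_⟩
      have hd : (addOrderOf c : ℤ) ∣ m := addOrderOf_dvd_iff_zsmul_eq_zero.mpr hm
      rw [h0] at hd
      norm_num at hd
      simp [hd]
    · have h1 : addOrderOf c ≠ 1 := fun h => hc (AddMonoid.addOrderOf_eq_one_iff.mp h)
      have h2 : 2 ≤ addOrderOf c := by omega
      obtain ⟨ζ, hζn, hζ1⟩ := exists_nontrivial_root_of_unity K h2 (hord c h0)
      have hζ0 : ζ ≠ 0 := by
        rintro rfl
        rw [zero_pow (by omega)] at hζn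
        exact one_ne_zero hζn.symm
      refine ⟨Units.mk0 ζ hζ0, by simpa [Units.ext_iff] using hζ1, fun m hm => ?_⟩
      obtain ⟨t, rfl⟩ := addOrderOf_dvd_iff_zsmul_eq_zero.mpr hm
      rw [zpow_mul]
      have hone : (Units.mk0 ζ hζ0) ^ (addOrderOf c : ℤ) = 1 := by
        rw [zpow_natCast]
        ext
        push_cast
        exact hζn
      rw [hone, one_zpow]
  -- build a divisible target
  letI : RootableBy Kˣ ℕ := rootableByOfPowLeftSurj _ _ (by
    intro n hn a
    obtain ⟨z, hz⟩ := IsAlgClosed.exists_pow_nat_eq (a : K) (Nat.pos_of_ne_zero hn)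
    have hz0 : z ≠ 0 := by
      rintro rfl
      rw [zero_pow hn] at hz
      exact a.ne_zero hz.symm
    exact ⟨Units.mk0 z hz0, Units.ext (by push_cast; exact hz)⟩)
  letI : RootableBy Kˣ ℤ := Group.rootableByIntOfRootableByNat Kˣ
  letI : DivisibleBy (Additive Kˣ) ℤ :=
    { div := fun a n => Additive.ofMul (RootableBy.root a.toMul n)
      div_zero := fun a => congrArg Additive.ofMul (RootableBy.root_zero _)
      div_cancel := fun {n} a hn => by
        show n • Additive.ofMul (RootableBy.root a.toMul n) = a
        rw [← ofMul_zpow, RootableBy.root_cancel _ hn]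
        rfl }
  haveI hinj : Module.Injective ℤ (Additive Kˣ) := (Module.Baer.of_divisible _).injective
  let f : ℤ →ₗ[ℤ] B := LinearMap.toSpanSingleton ℤ B c
  let g₀ : ℤ →ₗ[ℤ] Additive Kˣ := LinearMap.toSpanSingleton ℤ (Additive Kˣ) (Additive.ofMul u)
  have hker : LinearMap.ker f ≤ LinearMap.ker g₀ := by
    intro m hm
    simp only [LinearMap.mem_ker, LinearMap.toSpanSingleton_apply, f, g₀] at hm ⊢
    have := hu m hm
    show m • Additive.ofMul u = 0
    rw [← ofMul_zpow, this]
    rfl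
  let g : ↥(LinearMap.range f) →ₗ[ℤ] Additive Kˣ :=
    (Submodule.liftQ (LinearMap.ker f) g₀ hker).comp f.quotKerEquivRange.symm.toLinearMap
  obtain ⟨h, hh⟩ := hinj.out (LinearMap.range f).subtype (Submodule.injective_subtype _) g
  refine ⟨AddMonoidHom.toMultiplicativeLeft h.toAddMonoidHom, ?_⟩
  have hmem : c ∈ LinearMap.range f := ⟨1, by simp [f]⟩
  have hc1 : f 1 = c := by simp [f]
  have hval : h c = Additive.ofMul u := by
    have h1 : ((⟨c, hmem⟩ : LinearMap.range f) : B) = c := rfl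
    have := hh ⟨c, hmem⟩
    rw [Submodule.subtype_apply, h1] at this
    rw [this]
    show (Submodule.liftQ (LinearMap.ker f) g₀ hker) (f.quotKerEquivRange.symm ⟨c, hmem⟩) = _
    have h2 : (⟨c, hmem⟩ : LinearMap.range f) = ⟨f 1, LinearMap.mem_range_self f 1⟩ := by
      ext; simp [hc1]
    rw [h2, LinearMap.quotKerEquivRange_symm_apply_image]
    show (Submodule.liftQ (LinearMap.ker f) g₀ hker) (Submodule.Quotient.mk 1) = _
    rw [Submodule.liftQ_apply]
    simp [g₀]
  show Additive.toMul (h.toAddMonoidHom c) ≠ 1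
  rw [LinearMap.toAddMonoidHom_coe, hval]
  exact fun hcontra => hu1 hcontra


private lemma isReduced_of_algClosed (K : Type) [Field K] [IsAlgClosed K]
    (B : Type) [AddCommGroup B]
    (hord : ∀ c : B, addOrderOf c ≠ 0 → (addOrderOf c : K) ≠ 0) :
    IsReduced (AddMonoidAlgebra K B) := by
  constructor
  rintro x ⟨n, hxn⟩
  rcases Nat.eq_zero_or_pos n with rfl | hn
  · rw [pow_zero] at hxn
    exact absurd hxn one_ne_zero
  have heval : ∀ χ : Multiplicative B →* K, (AddMonoidAlgebra.lift K K B) χ x = 0 := by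
    intro χ
    have h1 : ((AddMonoidAlgebra.lift K K B) χ x) ^ n = 0 := by
      rw [← map_pow, hxn, map_zero]
    exact pow_eq_zero_iff hn.ne' |>.mp h1
  let E : B → ((Multiplicative B →* K) →* K) := fun b =>
    { toFun := fun χ => χ (Multiplicative.ofAdd b)
      map_one' := rfl
      map_mul' := fun χ ψ => rfl }
  have hE : Function.Injective E := by
    intro b b' hbb
    by_contra hne
    obtain ⟨χ, hχ⟩ := exists_character K hord (sub_ne_zero.mpr hne)
    have happ : (χ (Multiplicative.ofAdd b) : K) = (χ (Multiplicative.ofAdd b') : K) :=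
      congrFun (congrArg (fun F => F.toFun) hbb) ((Units.coeHom K).comp χ)
    have hunits : χ (Multiplicative.ofAdd b) = χ (Multiplicative.ofAdd b') := Units.ext happ
    have hb : Multiplicative.ofAdd b
        = Multiplicative.ofAdd (b - b') * Multiplicative.ofAdd b' := by
      rw [← ofAdd_add]
      congr 1
      abel
    rw [hb, map_mul] at hunits
    exact hχ (mul_right_cancel (hunits.trans (one_mul _).symm))
  have hx0 : ∀ χ : Multiplicative B →* K,
      (Finsupp.sum x.coeff fun b a => a * χ (Multiplicative.ofAdd b)) = 0 := by
    intro χ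
    have h2 := heval χ
    rw [AddMonoidAlgebra.lift_apply] at h2
    simpa [smul_eq_mul] using h2
  have hli := linearIndependent_monoidHom (Multiplicative B →* K) K
  have hy : Finsupp.linearCombination K
      (fun f : (Multiplicative B →* K) →* K => (f : (Multiplicative B →* K) → K))
      (Finsupp.mapDomain E x.coeff) = 0 := by
    rw [Finsupp.linearCombination_mapDomain]
    rw [Finsupp.linearCombination_apply]
    funext χ
    classical
    rw [Pi.zero_apply, Finsupp.sum, Finset.sum_apply]
    simp only [Function.comp_apply, Pi.smul_apply, smul_eq_mul]
    exact hx0 χ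
  have hz : Finsupp.mapDomain E x.coeff = 0 := linearIndependent_iff.mp hli _ hy
  have : Finsupp.mapDomain E x.coeff = Finsupp.mapDomain E (0 : B →₀ K) := by
    rw [hz, Finsupp.mapDomain_zero]
  exact AddMonoidAlgebra.coeff_injective (Finsupp.mapDomain_injective hE this)


private noncomputable def mapRangeRingHom {R S : Type} [CommSemiring R] [CommSemiring S]
    (B : Type) [AddCommMonoid B] (ψ : R →+* S) :
    AddMonoidAlgebra R B →+* AddMonoidAlgebra S B :=
  AddMonoidAlgebra.liftNCRingHom (AddMonoidAlgebra.singleZeroRingHom.comp ψ)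
    (AddMonoidAlgebra.of S B) fun _ _ => Commute.all _ _

private lemma mapRangeRingHom_apply {R S : Type} [CommSemiring R] [CommSemiring S]
    {B : Type} [AddCommMonoid B] (ψ : R →+* S) (x : AddMonoidAlgebra R B) (b : B) :
    (mapRangeRingHom B ψ x).coeff b = ψ (x.coeff b) := by
  classical
  induction x using AddMonoidAlgebra.induction_linear with
  | zero => simp [map_zero]
  | add f g hf hg =>
      have : mapRangeRingHom B ψ (f + g) = mapRangeRingHom B ψ f + mapRangeRingHom B ψ g :=
        map_add _ _ _
      rw [this]
      show (mapRangeRingHom B ψ f).coeff b + (mapRangeRingHom B ψ g).coeff b = ψ ((f + g).coeff b)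
      rw [hf, hg, AddMonoidAlgebra.coeff_add, Finsupp.add_apply, map_add]
  | single a r =>
      have h1 : mapRangeRingHom B ψ (AddMonoidAlgebra.single a r)
          = AddMonoidAlgebra.single a (ψ r) := by
        show AddMonoidAlgebra.liftNC _ _ (AddMonoidAlgebra.single a r) = _
        rw [AddMonoidAlgebra.liftNC_single]
        show AddMonoidAlgebra.single 0 (ψ r) * AddMonoidAlgebra.single a 1 = _
        rw [AddMonoidAlgebra.single_mul_single, zero_add, mul_one]
      rw [h1]
      show Finsupp.single a (ψ r) b = ψ (Finsupp.single a r b)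
      simp [Finsupp.single_apply, apply_ite ψ]

/-- let `B` be an abelian group, `p` a prime or zero, and `k` the prime field
of characteristic `p` (any field of characteristic `p` works, since an algebra over it is in
particular an `𝔽_p`-algebra).  For every nonzero reduced `k`-algebra `A`, the group algebra
`A[B]` is reduced iff `B` contains no element of order `p`; in particular `A[B]` is reduced
whenever `p = 0` or `B` is torsion-free. -/
theorem group_algebra_reduced_iff_no_element_of_order_p
    {p : ℕ} (hp : p = 0 ∨ p.Prime)
    (k : Type) [Field k] [CharP k p]
    (B : Type) [AddCommGroup B]
    (A : Type) [CommRing A] [Algebra k A] [Nontrivial A] [IsReduced A] :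
    (IsReduced (AddMonoidAlgebra A B) ↔ ¬∃ b : B, 0 < p ∧ addOrderOf b = p) ∧
      ((p = 0 ∨ ∀ (b : B) (n : ℕ), 0 < n → n • b = 0 → b = 0) →
        IsReduced (AddMonoidAlgebra A B)) := by
  have hkA : Function.Injective (algebraMap k A) := (algebraMap k A).injective
  haveI : CharP A p := charP_of_injective_ringHom hkA p
  have forward : IsReduced (AddMonoidAlgebra A B) → ¬∃ b : B, 0 < p ∧ addOrderOf b = p := by
    rintro hred ⟨b, hppos, hb⟩
    have hpprime : p.Prime := by
      rcases hp with rfl | h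
      · omega
      · exact h
    haveI : Fact p.Prime := ⟨hpprime⟩
    haveI : CharP (AddMonoidAlgebra A B) p := by
      refine charP_of_injective_ringHom
        (f := (AddMonoidAlgebra.singleZeroRingHom : A →+* AddMonoidAlgebra A B)) ?_ p
      intro r s hrs
      have h0 := congrArg (fun f : AddMonoidAlgebra A B => f.coeff (0 : B)) hrs
      simpa [AddMonoidAlgebra.singleZeroRingHom] using h0
    have hpb : p • b = 0 := by rw [← hb]; exact addOrderOf_nsmul_eq_zero b
    set e : AddMonoidAlgebra A B :=
      AddMonoidAlgebra.single b 1 - AddMonoidAlgebra.single 0 1 with he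
    have hepow : e ^ p = 0 := by
      rw [he, sub_pow_char, AddMonoidAlgebra.single_pow, AddMonoidAlgebra.single_pow, one_pow,
        hpb, smul_zero, sub_self]
    have hb0 : b ≠ 0 := by
      rintro rfl
      rw [addOrderOf_zero] at hb
      exact hpprime.ne_one hb.symm
    have he0 : e ≠ 0 := by
      intro h0
      have hcoeff := congrArg (fun f : AddMonoidAlgebra A B => f.coeff b) h0
      have hcoeff' : (Finsupp.single b (1:A) - Finsupp.single (0:B) (1:A)) b
          = (0 : B →₀ A) b := hcoeff
      simp only [Finsupp.sub_apply, Finsupp.single_eq_same,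
        Finsupp.single_eq_of_ne' (Ne.symm hb0), Finsupp.coe_zero, Pi.zero_apply,
        sub_zero] at hcoeff'
      exact one_ne_zero (α := A) hcoeff'
    exact he0 ((IsNilpotent.eq_zero (R := AddMonoidAlgebra A B) ⟨p, hepow⟩))
  have backward : (¬∃ b : B, 0 < p ∧ addOrderOf b = p) → IsReduced (AddMonoidAlgebra A B) := by
    intro hB
    constructor
    rintro x ⟨n, hxn⟩
    have key : ∀ b₀ : B, x.coeff b₀ = 0 := by
      intro b₀
      have hnil : (x.coeff b₀) ∈ nilradical A := by
        rw [nilradical_eq_sInf, Submodule.mem_sInf]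
        intro 𝔭 h𝔭
        haveI h𝔭' : Ideal.IsPrime 𝔭 := h𝔭
        haveI : IsDomain (A ⧸ 𝔭) := Ideal.Quotient.isDomain 𝔭
        let K := AlgebraicClosure (FractionRing (A ⧸ 𝔭))
        set ψ₂ : (A ⧸ 𝔭) →+* K :=
          (algebraMap (FractionRing (A ⧸ 𝔭)) K).comp
            (algebraMap (A ⧸ 𝔭) (FractionRing (A ⧸ 𝔭))) with hψ₂def
        have hψ₂ : Function.Injective ψ₂ :=
          (algebraMap (FractionRing (A ⧸ 𝔭)) K).injective.comp
            (IsFractionRing.injective (A ⧸ 𝔭) (FractionRing (A ⧸ 𝔭)))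
        set ψ : A →+* K := ψ₂.comp (Ideal.Quotient.mk 𝔭) with hψdef
        have hordK : ∀ c : B, addOrderOf c ≠ 0 → ((addOrderOf c : ℕ) : K) ≠ 0 := by
          intro c hc0
          have hpm : ¬ p ∣ addOrderOf c := by
            intro hdvd
            rcases hp with rfl | hpp
            · exact hc0 (Nat.zero_dvd.mp hdvd)
            · refine hB ⟨(addOrderOf c / p) • c, hpp.pos, ?_⟩
              have hne : addOrderOf c / p ≠ 0 := by
                have h1 := Nat.le_of_dvd (Nat.pos_of_ne_zero hc0) hdvd
                have := Nat.div_pos h1 hpp.pos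
                omega
              rw [addOrderOf_nsmul' c hne,
                Nat.gcd_eq_right (Nat.div_dvd_of_dvd hdvd),
                Nat.div_div_self hdvd hc0]
          have hmk : ((addOrderOf c : ℕ) : k) ≠ 0 := fun h =>
            hpm ((CharP.cast_eq_zero_iff k p _).mp h)
          have hunitA : IsUnit ((addOrderOf c : ℕ) : A) := by
            rw [show (((addOrderOf c : ℕ) : A)) = algebraMap k A ((addOrderOf c : ℕ) : k) by
              rw [map_natCast]]
            exact (hmk.isUnit).map (algebraMap k A)
          intro hK0
          have hψm : ψ ((addOrderOf c : ℕ) : A) = 0 := by rw [map_natCast]; exact hK0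
          have := hunitA.map ψ
          rw [hψm] at this
          exact not_isUnit_zero this
        haveI hred := isReduced_of_algClosed K B hordK
        have hx2 : (mapRangeRingHom B ψ x) ^ n = 0 := by rw [← map_pow, hxn, map_zero]
        have hx3 : mapRangeRingHom B ψ x = 0 := IsNilpotent.eq_zero ⟨n, hx2⟩
        have hx4 : ψ (x.coeff b₀) = 0 := by
          rw [← mapRangeRingHom_apply ψ x b₀, hx3]
          rfl
        have hx5 : Ideal.Quotient.mk 𝔭 (x.coeff b₀) = 0 := hψ₂ (by rwa [map_zero])
        exact (Ideal.Quotient.eq_zero_iff_mem).mp hx5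
      have : IsNilpotent (x.coeff b₀) := mem_nilradical.mp hnil
      exact this.eq_zero
    exact AddMonoidAlgebra.coeff_injective (Finsupp.ext key)
  refine ⟨⟨forward, backward⟩, ?_⟩
  intro h
  apply backward
  rintro ⟨b, hppos, hb⟩
  rcases h with rfl | htf
  · exact lt_irrefl 0 hppos
  · have hb0 : b = 0 := htf b p hppos (by rw [← hb]; exact addOrderOf_nsmul_eq_zero b)
    rw [hb0, addOrderOf_zero] at hb
    rcases hp with rfl | hpp
    · omega
    · exact hpp.ne_one hb.symm
end

section
/- Let h : Q → P be an injective, dense, reduced, and local map of sharp fine monoids. Then h is an isomorphism. -/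
/-- The ideal `I(h) = h(Q ∖ Q*) + P` of `P` generated by the images of the non-units of `Q`
under `h : Q → P`. -/
def idealOfHom {Q P : Type*} [AddCommMonoid Q] [AddCommMonoid P] (h : Q →+ P) : Set P :=
  {y : P | ∃ q : Q, ¬IsAddUnit q ∧ ∃ p : P, y = h q + p}

/-- an injective, dense, reduced, local map `h : Q → P` of sharp fine monoids
is an isomorphism. -/
theorem injective_dense_reduced_local_is_iso
    {Q P : Type*} [AddCommMonoid Q] [AddCommMonoid P]
    [AddMonoid.FG Q] [AddMonoid.FG P]
    (hQint : ∀ a b c : Q, a + b = a + c → b = c)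
    (hPint : ∀ a b c : P, a + b = a + c → b = c)
    (hQsharp : ∀ q : Q, IsAddUnit q → q = 0)
    (hPsharp : ∀ p : P, IsAddUnit p → p = 0)
    (h : Q →+ P)
    (hinj : Function.Injective h)
    (hdense : ∀ p : P, ∃ n : ℕ, 0 < n ∧ ∃ q : Q, n • p = h q)
    (hlocal : ∀ q : Q, IsAddUnit (h q) → IsAddUnit q)
    (hreduced : ∀ (x : P) (n : ℕ), 0 < n → n • x ∈ idealOfHom h → x ∈ idealOfHom h) :
    Function.Bijective h := by
  classical
  refine ⟨hinj, ?_⟩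
  intro p0
  by_contra hp0
  push_neg at hp0
  -- Key step: any element not in the range can be written as (nonzero) + (not in range)
  have key : ∀ p : P, (∀ a, h a ≠ p) → ∃ p' : P, (∀ a, h a ≠ p') ∧ ∃ r : P, r ≠ 0 ∧ p = r + p' := by
    intro p hp
    have hpne : p ≠ 0 := fun h0 => hp 0 (by simp [h0])
    obtain ⟨n, hn, q, hq⟩ := hdense p
    have hqnu : ¬ IsAddUnit q := by
      intro hu
      have hq0 : q = 0 := hQsharp q hu
      rw [hq0, map_zero] at hq
      obtain ⟨m, rfl⟩ := Nat.exists_eq_succ_of_ne_zero hn.ne'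
      have hpm : p + m • p = 0 := by
        rw [add_comm, ← succ_nsmul]; exact hq
      exact hpne (hPsharp p (IsAddUnit.of_add_eq_zero _ hpm))
    have hmem : (n • p) ∈ idealOfHom h := ⟨q, hqnu, 0, by rw [hq, add_zero]⟩
    obtain ⟨q', hq', p', hp'⟩ := hreduced p n hn hmem
    refine ⟨p', ?_, h q', ?_, hp'⟩
    · intro a ha
      exact hp (q' + a) (by rw [map_add, ha, ← hp'])
    · intro h0
      exact hq' (hlocal q' (by rw [h0]; exact isAddUnit_zero))
  choose next hnext hstep using key
  -- Build an infinite strictly descending (for divisibility) sequence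
  let f : ℕ → {p : P // ∀ a, h a ≠ p} := fun n =>
    Nat.rec ⟨p0, hp0⟩ (fun _ x => ⟨next x.1 x.2, hnext x.1 x.2⟩) n
  have hf : ∀ n, ∃ r : P, r ≠ 0 ∧ (f n).1 = r + (f (n + 1)).1 := fun n =>
    hstep (f n).1 (f n).2
  have hchain : ∀ m n : ℕ, m < n → ∃ r : P, r ≠ 0 ∧ (f m).1 = r + (f n).1 := by
    intro m n
    induction n with
    | zero => intro hmn; exact absurd hmn (Nat.not_lt_zero m)
    | succ k ih =>
      intro hmn
      rcases Nat.lt_succ_iff_lt_or_eq.mp hmn with hlt | hEq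
      · obtain ⟨r, hr0, hr⟩ := ih hlt
        obtain ⟨s, hs0, hs⟩ := hf k
        refine ⟨r + s, ?_, by rw [hr, hs, add_assoc]⟩
        intro h0
        exact hr0 (hPsharp r (IsAddUnit.of_add_eq_zero _ h0))
      · subst hEq; exact hf m
  -- A surjection from ℕ^S onto P, from finite generation
  obtain ⟨S, hS⟩ : ∃ S : Finset P, AddSubmonoid.closure (S : Set P) = ⊤ := AddMonoid.FG.fg_top
  set ψ : (S → ℕ) → P := fun v => ∑ i : S, v i • (i : P) with hψ
  have hψadd : ∀ a b : S → ℕ, ψ (a + b) = ψ a + ψ b := by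
    intro a b
    simp [hψ, add_nsmul, Finset.sum_add_distrib]
  have hψsurj : ∀ p : P, ∃ v : S → ℕ, ψ v = p := by
    intro p
    have hpmem : p ∈ AddSubmonoid.closure (S : Set P) := by rw [hS]; trivial
    induction hpmem using AddSubmonoid.closure_induction with
    | mem x hx =>
      refine ⟨Pi.single ⟨x, hx⟩ 1, ?_⟩
      simp [hψ, Pi.single_apply, ite_smul]
    | zero => exact ⟨0, by simp [hψ]⟩
    | add x y hx hy ihx ihy =>
      obtain ⟨a, rfl⟩ := ihx
      obtain ⟨b, rfl⟩ := ihy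
      exact ⟨a + b, hψadd a b⟩
  choose lift hlift using hψsurj
  -- Dickson's lemma
  obtain ⟨m, n, hmn, hle⟩ :=
    wellQuasiOrdered_le (fun n => lift (f n).1)
  have hd : ψ (lift (f m).1) + ψ (fun i => lift (f n).1 i - lift (f m).1 i) = ψ (lift (f n).1) := by
    rw [← hψadd]
    congr 1
    funext i
    exact Nat.add_sub_cancel' (hle i)
  obtain ⟨r, hr0, hr⟩ := hchain m n hmn
  apply hr0
  have heq : (f m).1 + 0 = (f m).1 + (r + ψ (fun i => lift (f n).1 i - lift (f m).1 i)) := by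
    rw [add_zero]
    calc (f m).1 = r + (f n).1 := hr
      _ = r + (ψ (lift (f m).1) + ψ (fun i => lift (f n).1 i - lift (f m).1 i)) := by
          rw [hd, hlift]
      _ = (f m).1 + (r + ψ (fun i => lift (f n).1 i - lift (f m).1 i)) := by
          rw [hlift]
          abel
  have h0 := (hPint _ _ _ heq).symm
  exact hPsharp r (IsAddUnit.of_add_eq_zero _ h0)
end

section
/- Let h : Q → P be a map of fine monoids. The following are equivalent: (a) the restriction h* : Q* → P* to units is injective with finite cokernel and P is the pushout of Q ← Q* → P* as monoids; (b) h is injective, the induced map of sharpenings Q/Q* → P/P* is an isomorphism, and the quotient group Pᵍᵖ/Qᵍᵖ is finite; (c) there is a finite subset S of the unit group P* that is a basis of P as a Q-module, i.e., every p ∈ P is uniquely expressible as h(q) + s with q ∈ Q, s ∈ S. -/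
/-- The submonoid of units of a commutative monoid. -/
def addUnitsSubmonoid (M : Type*) [AddCommMonoid M] : AddSubmonoid M where
  carrier := {x | IsAddUnit x}
  zero_mem' := isAddUnit_zero
  add_mem' := fun ha hb => ha.add hb

/-- The map induced on unit groups by a monoid homomorphism. -/
def unitsMap {Q P : Type*} [AddCommMonoid Q] [AddCommMonoid P] (h : Q →+ P) :
    addUnitsSubmonoid Q →+ addUnitsSubmonoid P :=
  AddMonoidHom.codRestrict (h.comp (addUnitsSubmonoid Q).subtype) (addUnitsSubmonoid P)
    fun x => IsAddUnit.map h x.2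

/-- Condition (a): `h* : Q* → P*` is injective with finite cokernel, and `P` is the pushout
of `Q ← Q* → P*` (expressed via the universal property of the pushout). -/
def CondA {Q P : Type} [AddCommMonoid Q] [AddCommMonoid P] (h : Q →+ P) : Prop :=
  (∀ q q' : Q, IsAddUnit q → IsAddUnit q' → h q = h q' → q = q') ∧
  (∃ S : Finset P, ∀ u : P, IsAddUnit u → ∃ s ∈ S, ∃ q : Q, IsAddUnit q ∧ u = h q + s) ∧
  (∀ (N : Type) [AddCommMonoid N] (α : Q →+ N) (β : addUnitsSubmonoid P →+ N),
    α.comp (addUnitsSubmonoid Q).subtype = β.comp (unitsMap h) →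
    ∃! γ : P →+ N, γ.comp h = α ∧ γ.comp (addUnitsSubmonoid P).subtype = β)

/-- Condition (b): `h` is injective, the induced map of sharpenings `Q/Q* → P/P*` is an
isomorphism (expressed as surjectivity and injectivity modulo units), and `Pᵍᵖ/Qᵍᵖ` is
finite (expressed intrinsically: finitely many classes of differences `a - b` modulo
`Qᵍᵖ`). -/
def CondB {Q P : Type} [AddCommMonoid Q] [AddCommMonoid P] (h : Q →+ P) : Prop :=
  Function.Injective h ∧
  (∀ p : P, ∃ q : Q, ∃ u : P, IsAddUnit u ∧ p = h q + u) ∧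
  (∀ q q' : Q, (∃ u : P, IsAddUnit u ∧ h q = h q' + u) →
    ∃ v : Q, IsAddUnit v ∧ q = q' + v) ∧
  (∃ S : Finset (P × P), ∀ a b : P, ∃ cd ∈ S, ∃ q q' : Q,
    a + cd.2 + h q = b + cd.1 + h q')

/-- Condition (c): there is a finite subset `S` of the unit group `P*` which is a basis of
`P` as a `Q`-module: every `p ∈ P` is uniquely of the form `h q + s` with `q ∈ Q`,
`s ∈ S`. -/
def CondC {Q P : Type} [AddCommMonoid Q] [AddCommMonoid P] (h : Q →+ P) : Prop :=
  ∃ S : Finset P, (↑S : Set P) ⊆ {x : P | IsAddUnit x} ∧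
    ∀ p : P, ∃! x : Q × P, x.2 ∈ S ∧ p = h x.1 + x.2

section Aux

variable {Q P : Type} [AddCommMonoid Q] [AddCommMonoid P]

/-- In a CondC situation, the first component of any decomposition of a unit is a unit. -/
private lemma condC_unit_fst
    (hQint : ∀ a b c : Q, a + b = a + c → b = c)
    (h : Q →+ P) (S : Finset P) (hSu : ∀ s ∈ S, IsAddUnit s)
    (hdec : ∀ p : P, ∃! x : Q × P, x.2 ∈ S ∧ p = h x.1 + x.2) :
    ∀ u a s, IsAddUnit u → s ∈ S → u = h a + s → IsAddUnit a := by
  obtain ⟨⟨a₀, s₀⟩, ⟨hs₀S, h0E⟩, h0U⟩ := hdec 0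
  -- a₀ is a unit
  have ha₀ : IsAddUnit a₀ := by
    obtain ⟨⟨c, r⟩, ⟨hrS, hcrE⟩, _⟩ := hdec (s₀ + s₀)
    have e : ((a₀ + a₀ + c, r) : Q × P) = (a₀, s₀) := by
      apply h0U
      refine ⟨hrS, ?_⟩
      calc (0 : P) = (h a₀ + s₀) + (h a₀ + s₀) := by rw [← h0E]; rw [add_zero]
        _ = h a₀ + h a₀ + (s₀ + s₀) := by abel
        _ = h a₀ + h a₀ + (h c + r) := by rw [← hcrE]
        _ = h (a₀ + a₀ + c) + r := by rw [map_add, map_add]; abel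
    have e1 : a₀ + a₀ + c = a₀ := congrArg Prod.fst e
    have e2 : a₀ + c = 0 := hQint a₀ _ _ (by rw [← add_assoc, e1, add_zero])
    exact IsAddUnit.of_add_eq_zero (a := a₀) c e2
  intro u a s hu hsS huE
  obtain ⟨u', hu'⟩ := hu.exists_neg
  obtain ⟨⟨b, t⟩, ⟨htS, hbtE⟩, _⟩ := hdec u'
  obtain ⟨⟨c, r⟩, ⟨hrS, hcrE⟩, _⟩ := hdec (s + t)
  have e : ((a + b + c, r) : Q × P) = (a₀, s₀) := by
    apply h0U
    refine ⟨hrS, ?_⟩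
    calc (0 : P) = u + u' := hu'.symm
      _ = (h a + s) + (h b + t) := by rw [← huE, ← hbtE]
      _ = h a + h b + (s + t) := by abel
      _ = h a + h b + (h c + r) := by rw [← hcrE]
      _ = h (a + b + c) + r := by rw [map_add, map_add]; abel
  have e1 : a + (b + c) = a₀ := by rw [← add_assoc]; exact congrArg Prod.fst e
  obtain ⟨w, hw⟩ := ha₀.exists_neg
  exact IsAddUnit.of_add_eq_zero (a := a) (b + c + w)
    (by rw [← add_assoc, e1, hw])

/-- In a CondC situation, `h` is injective. -/
private lemma condC_inj
    (hQint : ∀ a b c : Q, a + b = a + c → b = c)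
    (h : Q →+ P) (S : Finset P) (hSu : ∀ s ∈ S, IsAddUnit s)
    (hdec : ∀ p : P, ∃! x : Q × P, x.2 ∈ S ∧ p = h x.1 + x.2) :
    Function.Injective h := by
  obtain ⟨⟨a₀, s₀⟩, ⟨hs₀S, h0E⟩, _⟩ := hdec 0
  have hs₀S' : s₀ ∈ S := hs₀S
  intro q q' hqq'
  have key : ∀ r : Q, (h r : P) = h (r + a₀) + s₀ := by
    intro r
    calc h r = h r + 0 := by rw [add_zero]
      _ = h r + (h a₀ + s₀) := by rw [← h0E]
      _ = h (r + a₀) + s₀ := by rw [map_add]; abel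
  have e : ((q + a₀, s₀) : Q × P) = (q' + a₀, s₀) :=
    (hdec (h q)).unique ⟨hs₀S', key q⟩ ⟨hs₀S', by rw [hqq']; exact key q'⟩
  have e1 : q + a₀ = q' + a₀ := congrArg Prod.fst e
  exact hQint a₀ q q' (by rw [add_comm a₀ q, add_comm a₀ q', e1])

/-- In a CondC situation, sharpening injectivity (b3) holds. -/
private lemma condC_b3
    (hQint : ∀ a b c : Q, a + b = a + c → b = c)
    (h : Q →+ P) (S : Finset P) (hSu : ∀ s ∈ S, IsAddUnit s)
    (hdec : ∀ p : P, ∃! x : Q × P, x.2 ∈ S ∧ p = h x.1 + x.2) :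
    ∀ q q' : Q, (∃ u : P, IsAddUnit u ∧ h q = h q' + u) →
      ∃ v : Q, IsAddUnit v ∧ q = q' + v := by
  obtain ⟨⟨a₀, s₀⟩, ⟨hs₀S0, h0E⟩, _⟩ := hdec 0
  have hs₀S : s₀ ∈ S := hs₀S0
  have ha₀ : IsAddUnit a₀ := by
    have := condC_unit_fst hQint h S hSu hdec 0 a₀ s₀ isAddUnit_zero hs₀S h0E
    exact this
  intro q q' ⟨u, hu, huE⟩
  obtain ⟨⟨a, s⟩, ⟨hsS, haE⟩, _⟩ := hdec u
  have ha : IsAddUnit a := condC_unit_fst hQint h S hSu hdec u a s hu hsS haE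
  have key : (h q : P) = h (q + a₀) + s₀ := by
    calc h q = h q + 0 := by rw [add_zero]
      _ = h q + (h a₀ + s₀) := by rw [← h0E]
      _ = h (q + a₀) + s₀ := by rw [map_add]; abel
  have key2 : (h q : P) = h (q' + a) + s := by
    calc h q = h q' + u := huE
      _ = h q' + (h a + s) := by rw [← haE]
      _ = h (q' + a) + s := by rw [map_add]; abel
  have e : ((q + a₀, s₀) : Q × P) = (q' + a, s) :=
    (hdec (h q)).unique ⟨hs₀S, key⟩ ⟨hsS, key2⟩
  have e1 : q + a₀ = q' + a := congrArg Prod.fst e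
  obtain ⟨w, hw⟩ := ha₀.exists_neg
  refine ⟨a + w, ha.add (IsAddUnit.of_add_eq_zero (a := w) a₀ (by rw [add_comm]; exact hw)), ?_⟩
  calc q = q + 0 := by rw [add_zero]
    _ = q + (a₀ + w) := by rw [hw]
    _ = (q + a₀) + w := by rw [add_assoc]
    _ = (q' + a) + w := by rw [e1]
    _ = q' + (a + w) := by rw [add_assoc]

private lemma condC_to_condB
    (hQint : ∀ a b c : Q, a + b = a + c → b = c)
    (h : Q →+ P) (hc : CondC h) : CondB h := by
  obtain ⟨S, hSu', hdec⟩ := hc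
  have hSu : ∀ s ∈ S, IsAddUnit s := fun s hs => hSu' hs
  refine ⟨condC_inj hQint h S hSu hdec, ?_, condC_b3 hQint h S hSu hdec, ?_⟩
  · intro p
    obtain ⟨⟨a, s⟩, ⟨hsS, haE⟩, _⟩ := hdec p
    exact ⟨a, s, hSu s hsS, haE⟩
  · refine ⟨S ×ˢ S, ?_⟩
    intro a b
    obtain ⟨⟨qa, sa⟩, ⟨hsa, hae⟩, _⟩ := hdec a
    obtain ⟨⟨qb, sb⟩, ⟨hsb, hbe⟩, _⟩ := hdec b
    refine ⟨(sa, sb), Finset.mem_product.mpr ⟨hsa, hsb⟩, qb, qa, ?_⟩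
    rw [hae, hbe]
    abel

private lemma condC_to_condA
    (hQint : ∀ a b c : Q, a + b = a + c → b = c)
    (h : Q →+ P) (hc : CondC h) : CondA h := by
  classical
  obtain ⟨S, hSu', hdecEU⟩ := hc
  have hSu : ∀ s ∈ S, IsAddUnit s := fun s hs => hSu' hs
  have hinj := condC_inj hQint h S hSu hdecEU
  choose dec hdecS hdecE using fun p => (hdecEU p).exists
  have huniq : ∀ p (x : Q × P), x.2 ∈ S → p = h x.1 + x.2 → x = dec p :=
    fun p x h1 h2 => (hdecEU p).unique ⟨h1, h2⟩ ⟨hdecS p, hdecE p⟩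
  have hufst : ∀ p, IsAddUnit p → IsAddUnit (dec p).1 :=
    fun p hp => condC_unit_fst hQint h S hSu hdecEU p (dec p).1 (dec p).2 hp (hdecS p) (hdecE p)
  refine ⟨fun q q' _ _ e => hinj e, ⟨S, ?_⟩, ?_⟩
  · intro u hu
    exact ⟨(dec u).2, hdecS u, (dec u).1, hufst u hu, hdecE u⟩
  · intro N _ α β hcomp
    have hcompat : ∀ (q : Q) (hq : IsAddUnit q), α q = β ⟨h q, hq.map h⟩ := by
      intro q hq
      exact DFunLike.congr_fun hcomp (⟨q, hq⟩ : addUnitsSubmonoid Q)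
    set β' : P → N := fun x => if hx : IsAddUnit x then β ⟨x, hx⟩ else 0 with hβ'def
    have hβ' : ∀ (x : P) (hx : IsAddUnit x), β' x = β ⟨x, hx⟩ := fun x hx => dif_pos hx
    have hβ'add : ∀ x y : P, IsAddUnit x → IsAddUnit y → β' (x + y) = β' x + β' y := by
      intro x y hx hy
      rw [hβ' _ (hx.add hy), hβ' _ hx, hβ' _ hy, ← map_add]
      rfl
    have hβ'0 : β' (0 : P) = 0 := by
      rw [hβ' _ isAddUnit_zero]
      exact map_zero β
    have hval : ∀ (p : P) (a : Q) (s : P), s ∈ S → p = h a + s →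
        α (dec p).1 + β' (dec p).2 = α a + β' s := by
      intro p a s h1 h2
      have e := huniq p (a, s) h1 h2
      rw [← e]
    have hzero : α (dec 0).1 + β' (dec 0).2 = 0 := by
      have ha := hufst 0 isAddUnit_zero
      rw [hcompat _ ha, ← hβ' _ (ha.map h),
        ← hβ'add _ _ (ha.map h) (hSu _ (hdecS 0)), ← hdecE 0, hβ'0]
    have hunit : ∀ (u : P) (hu : IsAddUnit u), α (dec u).1 + β' (dec u).2 = β ⟨u, hu⟩ := by
      intro u hu
      have ha := hufst u hu
      rw [hcompat _ ha, ← hβ' _ (ha.map h),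
        ← hβ'add _ _ (ha.map h) (hSu _ (hdecS u)), ← hdecE u, hβ' _ hu]
    refine ⟨{ toFun := fun p => α (dec p).1 + β' (dec p).2,
              map_zero' := hzero, map_add' := ?_ }, ⟨?_, ?_⟩, ?_⟩
    · intro p p'
      show α (dec (p + p')).1 + β' (dec (p + p')).2 =
        (α (dec p).1 + β' (dec p).2) + (α (dec p').1 + β' (dec p').2)
      have hs : IsAddUnit ((dec p).2 + (dec p').2) :=
        (hSu _ (hdecS p)).add (hSu _ (hdecS p'))
      have hc := hufst _ hs
      have key : p + p' = h ((dec p).1 + (dec p').1 + (dec ((dec p).2 + (dec p').2)).1)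
          + (dec ((dec p).2 + (dec p').2)).2 := by
        calc p + p' = (h (dec p).1 + (dec p).2) + (h (dec p').1 + (dec p').2) := by
              rw [← hdecE p, ← hdecE p']
          _ = h (dec p).1 + h (dec p').1 + ((dec p).2 + (dec p').2) := by abel
          _ = h (dec p).1 + h (dec p').1 +
              (h (dec ((dec p).2 + (dec p').2)).1 + (dec ((dec p).2 + (dec p').2)).2) := by
              rw [← hdecE ((dec p).2 + (dec p').2)]
          _ = _ := by rw [map_add, map_add]; abel
      have hss : β' ((dec p).2) + β' ((dec p').2) =
          β' (h (dec ((dec p).2 + (dec p').2)).1) + β' ((dec ((dec p).2 + (dec p').2)).2) := by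
        rw [← hβ'add _ _ (hSu _ (hdecS p)) (hSu _ (hdecS p')),
          ← hβ'add _ _ (hc.map h) (hSu _ (hdecS ((dec p).2 + (dec p').2))),
          ← hdecE ((dec p).2 + (dec p').2)]
      rw [hval (p + p') _ _ (hdecS _) key]
      rw [map_add, map_add, hcompat _ hc, ← hβ' _ (hc.map h)]
      calc α (dec p).1 + α (dec p').1 + β' (h (dec ((dec p).2 + (dec p').2)).1)
            + β' ((dec ((dec p).2 + (dec p').2)).2)
          = α (dec p).1 + α (dec p').1 + (β' (h (dec ((dec p).2 + (dec p').2)).1)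
            + β' ((dec ((dec p).2 + (dec p').2)).2)) := by abel
        _ = α (dec p).1 + α (dec p').1 + (β' ((dec p).2) + β' ((dec p').2)) := by rw [← hss]
        _ = _ := by abel
    · ext q
      show α (dec (h q)).1 + β' (dec (h q)).2 = α q
      have key : h q = h (q + (dec 0).1) + (dec 0).2 := by
        calc h q = h q + 0 := by rw [add_zero]
          _ = h q + (h (dec 0).1 + (dec 0).2) := by rw [← hdecE 0]
          _ = _ := by rw [map_add]; abel
      rw [hval (h q) _ _ (hdecS 0) key, map_add, add_assoc, hzero, add_zero]
    · ext u
      show α (dec (u : P)).1 + β' (dec (u : P)).2 = β u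
      rw [hunit (u : P) u.2]
    · intro γ' ⟨f1, f2⟩
      ext p
      show γ' p = α (dec p).1 + β' (dec p).2
      have hs := hSu _ (hdecS p)
      calc γ' p = γ' (h (dec p).1 + (dec p).2) := by rw [← hdecE p]
        _ = γ' (h (dec p).1) + γ' ((dec p).2) := map_add γ' _ _
        _ = α (dec p).1 + β' (dec p).2 := by
            rw [show γ' (h (dec p).1) = α (dec p).1 from DFunLike.congr_fun f1 (dec p).1,
              show γ' ((dec p).2) = β ⟨(dec p).2, hs⟩ from
                DFunLike.congr_fun f2 (⟨(dec p).2, hs⟩ : addUnitsSubmonoid P),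
              hβ' _ hs]

private lemma condB_to_condC
    (hQint : ∀ a b c : Q, a + b = a + c → b = c)
    (hPint : ∀ a b c : P, a + b = a + c → b = c)
    (h : Q →+ P) (hb : CondB h) : CondC h := by
  classical
  obtain ⟨b1, b2, b3, S', hS'⟩ := hb
  set rel : P → P → Prop := fun u u' => ∃ v : Q, IsAddUnit v ∧ u' = u + h v with hrel
  have hrefl : ∀ u, rel u u := fun u => ⟨0, isAddUnit_zero, by rw [map_zero, add_zero]⟩
  have hsymm : ∀ {u u' : P}, rel u u' → rel u' u := by
    rintro u u' ⟨v, hv, he⟩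
    obtain ⟨w, hw⟩ := hv.exists_neg
    exact ⟨w, IsAddUnit.of_add_eq_zero (a := w) v (by rw [add_comm]; exact hw),
      by rw [he, add_assoc, ← map_add, hw, map_zero, add_zero]⟩
  have htrans : ∀ {u u' u'' : P}, rel u u' → rel u' u'' → rel u u'' := by
    rintro u u' u'' ⟨v, hv, he⟩ ⟨w, hw, he'⟩
    exact ⟨v + w, hv.add hw, by rw [he', he, map_add, add_assoc]⟩
  set st : Setoid P := ⟨rel, ⟨hrefl, hsymm, htrans⟩⟩ with hst
  have hsound : ∀ {a b : P}, rel a b → Quotient.mk st a = Quotient.mk st b :=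
    fun hab => Quotient.sound hab
  have hout : ∀ a : P, rel ((Quotient.mk st a).out) a :=
    fun a => Quotient.exact ((Quotient.mk st a).out_eq)
  set g : P × P → P := fun cd =>
    if hc : ∃ u : P, IsAddUnit u ∧ ∃ q q' : Q, u + cd.2 + h q = cd.1 + h q'
    then hc.choose else 0 with hg
  have hgu : ∀ cd, IsAddUnit (g cd) := by
    intro cd
    simp only [hg]
    split_ifs with hc
    exacts [hc.choose_spec.1, isAddUnit_zero]
  have hcover : ∀ u : P, IsAddUnit u → ∃ cd ∈ S', rel (g cd) u := by
    intro u hu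
    obtain ⟨cd, hcd, q₁, q₁', e1⟩ := hS' u 0
    rw [zero_add] at e1
    have hex : ∃ u' : P, IsAddUnit u' ∧ ∃ q q' : Q, u' + cd.2 + h q = cd.1 + h q' :=
      ⟨u, hu, q₁, q₁', e1⟩
    have hgcd : g cd = hex.choose := by simp only [hg]; rw [dif_pos hex]
    obtain ⟨hu₀, q₂, q₂', e2⟩ := hex.choose_spec
    have E : cd.2 + (u + h (q₁ + q₂')) = cd.2 + (hex.choose + h (q₂ + q₁')) := by
      calc cd.2 + (u + h (q₁ + q₂')) = (u + cd.2 + h q₁) + h q₂' := by rw [map_add]; abel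
        _ = (cd.1 + h q₁') + h q₂' := by rw [e1]
        _ = (cd.1 + h q₂') + h q₁' := by abel
        _ = (hex.choose + cd.2 + h q₂) + h q₁' := by rw [e2]
        _ = cd.2 + (hex.choose + h (q₂ + q₁')) := by rw [map_add]; abel
    have E2 : u + h (q₁ + q₂') = hex.choose + h (q₂ + q₁') := hPint _ _ _ E
    obtain ⟨ui, hui⟩ := hu.exists_neg
    have huiu : IsAddUnit ui := IsAddUnit.of_add_eq_zero (a := ui) u (by rw [add_comm]; exact hui)
    have E3 : h (q₁ + q₂') = h (q₂ + q₁') + (hex.choose + ui) := by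
      calc h (q₁ + q₂') = (u + ui) + h (q₁ + q₂') := by rw [hui, zero_add]
        _ = ui + (u + h (q₁ + q₂')) := by abel
        _ = ui + (hex.choose + h (q₂ + q₁')) := by rw [E2]
        _ = h (q₂ + q₁') + (hex.choose + ui) := by abel
    obtain ⟨v, hv, hv2⟩ := b3 _ _ ⟨hex.choose + ui, hu₀.add huiu, E3⟩
    have E4 : h (q₂ + q₁') + (u + h v) = h (q₂ + q₁') + hex.choose := by
      calc h (q₂ + q₁') + (u + h v) = u + h ((q₂ + q₁') + v) := by
            rw [map_add h (q₂ + q₁') v]; abel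
        _ = u + h (q₁ + q₂') := by rw [← hv2]
        _ = hex.choose + h (q₂ + q₁') := E2
        _ = h (q₂ + q₁') + hex.choose := by abel
    have E5 : hex.choose = u + h v := (hPint _ _ _ E4).symm
    refine ⟨cd, hcd, ?_⟩
    rw [hgcd]
    exact hsymm ⟨v, hv, E5⟩
  set S₀ : Finset P := S'.image g with hS₀
  have hS₀u : ∀ s ∈ S₀, IsAddUnit s := by
    intro s hs
    obtain ⟨cd, _, rfl⟩ := Finset.mem_image.mp hs
    exact hgu cd
  set S : Finset P := S₀.image (fun s => (Quotient.mk st s).out) with hS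
  have hSmem : ∀ x ∈ S, IsAddUnit x := by
    intro x hx
    obtain ⟨s, hs, rfl⟩ := Finset.mem_image.mp hx
    obtain ⟨v, hv, hv2⟩ := hsymm (hout s)
    rw [hv2]
    exact (hS₀u s hs).add (hv.map h)
  have hdistinct : ∀ t t', t ∈ S → t' ∈ S → rel t t' → t = t' := by
    intro t t' ht ht' hrel'
    obtain ⟨a, _, rfl⟩ := Finset.mem_image.mp ht
    obtain ⟨b, _, rfl⟩ := Finset.mem_image.mp ht'
    have e1 : Quotient.mk st a = Quotient.mk st b := by
      rw [← (Quotient.mk st a).out_eq, ← (Quotient.mk st b).out_eq]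
      exact hsound hrel'
    rw [e1]
  have hkey : ∀ (q₁ q₂ : Q) (s₁ s₂ : P), s₁ ∈ S → s₂ ∈ S → h q₁ + s₁ = h q₂ + s₂ →
      q₁ = q₂ ∧ s₁ = s₂ := by
    intro q₁ q₂ s₁ s₂ hs₁ hs₂ heq
    have hu₁ := hSmem s₁ hs₁
    have hu₂ := hSmem s₂ hs₂
    obtain ⟨si, hsi⟩ := hu₁.exists_neg
    have E : h q₁ = h q₂ + (s₂ + si) := by
      calc h q₁ = (h q₁ + s₁) + si := by rw [add_assoc, hsi, add_zero]
        _ = (h q₂ + s₂) + si := by rw [heq]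
        _ = h q₂ + (s₂ + si) := by rw [add_assoc]
    obtain ⟨v, hv, hv2⟩ := b3 q₁ q₂ ⟨s₂ + si,
      hu₂.add (IsAddUnit.of_add_eq_zero (a := si) s₁ (by rw [add_comm]; exact hsi)), E⟩
    have E2 : h q₂ + s₂ = h q₂ + (s₁ + h v) := by
      calc h q₂ + s₂ = h q₁ + s₁ := heq.symm
        _ = h (q₂ + v) + s₁ := by rw [hv2]
        _ = h q₂ + (s₁ + h v) := by rw [map_add]; abel
    have E3 : s₂ = s₁ + h v := hPint _ _ _ E2
    have hss : s₁ = s₂ := hdistinct s₁ s₂ hs₁ hs₂ ⟨v, hv, E3⟩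
    have E4 : h v = 0 := hPint s₁ (h v) 0 (by rw [add_zero, ← E3, hss])
    have hv0 : v = 0 := b1 (by rw [E4, map_zero])
    exact ⟨by rw [hv2, hv0, add_zero], hss⟩
  refine ⟨S, fun x hx => hSmem x hx, fun p => ?_⟩
  obtain ⟨q, u, hu, hpE⟩ := b2 p
  have htS : (Quotient.mk st u).out ∈ S := by
    obtain ⟨cd, hcd, hrel'⟩ := hcover u hu
    have : Quotient.mk st (g cd) = Quotient.mk st u := hsound hrel'
    rw [hS]
    exact Finset.mem_image.mpr ⟨g cd, Finset.mem_image.mpr ⟨cd, hcd, rfl⟩, by rw [this]⟩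
  obtain ⟨v, hv, hv2⟩ := hout u
  have hpE2 : p = h (q + v) + (Quotient.mk st u).out := by
    calc p = h q + u := hpE
      _ = h q + ((Quotient.mk st u).out + h v) := by rw [← hv2]
      _ = h (q + v) + (Quotient.mk st u).out := by rw [map_add]; abel
  refine ⟨(q + v, (Quotient.mk st u).out), ⟨htS, hpE2⟩, ?_⟩
  rintro ⟨q₁, s₁⟩ ⟨hs₁, he₁⟩
  obtain ⟨e1, e2⟩ := hkey q₁ (q + v) s₁ ((Quotient.mk st u).out) hs₁ htS
    (by rw [← he₁, ← hpE2])
  simp only [Prod.mk.injEq]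
  exact ⟨e1, e2⟩

private lemma condA_to_condB
    (hQint : ∀ a b c : Q, a + b = a + c → b = c)
    (h : Q →+ P) (ha : CondA h) : CondB h := by
  classical
  obtain ⟨a1, ⟨S, a2⟩, a3⟩ := ha
  -- build the pushout as a quotient by an additive congruence
  have hrefl : ∀ x : Q × P, ∃ v v' : Q, IsAddUnit v ∧ IsAddUnit v' ∧
      x.1 + v = x.1 + v' ∧ x.2 + h v = x.2 + h v' :=
    fun x => ⟨0, 0, isAddUnit_zero, isAddUnit_zero, rfl, rfl⟩
  set c : AddCon (Q × P) :=
    { r := fun x y => ∃ v v' : Q, IsAddUnit v ∧ IsAddUnit v' ∧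
        x.1 + v = y.1 + v' ∧ y.2 + h v = x.2 + h v'
      iseqv := by
        refine ⟨hrefl, ?_, ?_⟩
        · rintro x y ⟨v, v', hv, hv', e1, e2⟩
          exact ⟨v', v, hv', hv, e1.symm, e2.symm⟩
        · rintro x y z ⟨v1, v1', hv1, hv1', e1, e2⟩ ⟨v2, v2', hv2, hv2', f1, f2⟩
          refine ⟨v1 + v2, v1' + v2', hv1.add hv2, hv1'.add hv2', ?_, ?_⟩
          · calc x.1 + (v1 + v2) = (x.1 + v1) + v2 := by rw [add_assoc]
              _ = (y.1 + v1') + v2 := by rw [e1]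
              _ = (y.1 + v2) + v1' := by abel
              _ = (z.1 + v2') + v1' := by rw [f1]
              _ = z.1 + (v1' + v2') := by abel
          · calc z.2 + h (v1 + v2) = (z.2 + h v2) + h v1 := by rw [map_add]; abel
              _ = (y.2 + h v2') + h v1 := by rw [f2]
              _ = (y.2 + h v1) + h v2' := by abel
              _ = (x.2 + h v1') + h v2' := by rw [e2]
              _ = x.2 + h (v1' + v2') := by rw [map_add]; abel
      add' := by
        rintro w x y z ⟨v1, v1', hv1, hv1', e1, e2⟩ ⟨v2, v2', hv2, hv2', f1, f2⟩
        refine ⟨v1 + v2, v1' + v2', hv1.add hv2, hv1'.add hv2', ?_, ?_⟩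
        · show w.1 + y.1 + (v1 + v2) = x.1 + z.1 + (v1' + v2')
          calc w.1 + y.1 + (v1 + v2) = (w.1 + v1) + (y.1 + v2) := by abel
            _ = (x.1 + v1') + (z.1 + v2') := by rw [e1, f1]
            _ = x.1 + z.1 + (v1' + v2') := by abel
        · show x.2 + z.2 + h (v1 + v2) = w.2 + y.2 + h (v1' + v2')
          calc x.2 + z.2 + h (v1 + v2) = (x.2 + h v1) + (z.2 + h v2) := by rw [map_add]; abel
            _ = (w.2 + h v1') + (y.2 + h v2') := by rw [e2, f2]
            _ = w.2 + y.2 + h (v1' + v2') := by rw [map_add]; abel } with hc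
  set α₁ : Q →+ c.Quotient := c.mk'.comp (AddMonoidHom.inl Q P) with hα₁
  set β₁ : addUnitsSubmonoid P →+ c.Quotient :=
    (c.mk'.comp (AddMonoidHom.inr Q P)).comp (addUnitsSubmonoid P).subtype with hβ₁
  have compat : α₁.comp (addUnitsSubmonoid Q).subtype = β₁.comp (unitsMap h) := by
    refine AddMonoidHom.ext fun x => ?_
    show c.mk' ((x : Q), (0 : P)) = c.mk' ((0 : Q), h (x : Q))
    exact c.eq.mpr ⟨0, (x : Q), isAddUnit_zero, x.2, by simp, by simp⟩
  obtain ⟨γ, ⟨hγh, hγβ⟩, _⟩ := a3 c.Quotient α₁ β₁ compat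
  have hγ1 : ∀ q : Q, γ (h q) = c.mk' (q, (0 : P)) := fun q => DFunLike.congr_fun hγh q
  have hγ2 : ∀ (u : P) (hu : IsAddUnit u), γ u = c.mk' ((0 : Q), u) :=
    fun u hu => DFunLike.congr_fun hγβ (⟨u, hu⟩ : addUnitsSubmonoid P)
  -- injectivity of h
  have b1 : Function.Injective h := by
    intro q q' e
    have E : c.mk' (q, (0 : P)) = c.mk' (q', (0 : P)) := by
      rw [← hγ1 q, ← hγ1 q', e]
    obtain ⟨v, v', hv, hv', e1, e2⟩ := c.eq.mp E
    have e2' : h v = h v' := by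
      have := e2
      simpa using this
    have evv : v = v' := a1 v v' hv hv' e2'
    have e1' : q + v = q' + v' := e1
    rw [← evv] at e1'
    exact hQint v q q' (by rw [add_comm v q, add_comm v q', e1'])
  -- surjectivity mod units, via the universal property applied to a submonoid
  have b2 : ∀ p : P, ∃ q : Q, ∃ u : P, IsAddUnit u ∧ p = h q + u := by
    set T : AddSubmonoid P :=
      { carrier := {p : P | ∃ q u, IsAddUnit u ∧ p = h q + u}
        zero_mem' := ⟨0, 0, isAddUnit_zero, by simp⟩
        add_mem' := by
          rintro x y ⟨qx, ux, hux, hex⟩ ⟨qy, uy, huy, hey⟩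
          exact ⟨qx + qy, ux + uy, hux.add huy, by rw [hex, hey, map_add]; abel⟩ } with hT
    set α₂ : Q →+ T := h.codRestrict T (fun q => ⟨q, 0, isAddUnit_zero, by rw [add_zero]⟩)
      with hα₂
    set β₂ : addUnitsSubmonoid P →+ T :=
      (addUnitsSubmonoid P).subtype.codRestrict T
        (fun u => ⟨0, (u : P), u.2, by rw [map_zero, zero_add]; rfl⟩) with hβ₂
    have compat₂ : α₂.comp (addUnitsSubmonoid Q).subtype = β₂.comp (unitsMap h) :=
      AddMonoidHom.ext fun x => Subtype.ext rfl
    obtain ⟨γ₂, ⟨hγ₂h, hγ₂β⟩, _⟩ := a3 T α₂ β₂ compat₂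
    have compatP : h.comp (addUnitsSubmonoid Q).subtype =
        (addUnitsSubmonoid P).subtype.comp (unitsMap h) :=
      AddMonoidHom.ext fun x => rfl
    obtain ⟨γP, _, huniqP⟩ := a3 P h (addUnitsSubmonoid P).subtype compatP
    have e1 : T.subtype.comp γ₂ = γP := by
      refine huniqP _ ⟨?_, ?_⟩
      · rw [AddMonoidHom.comp_assoc, hγ₂h]
        exact AddMonoidHom.ext fun q => rfl
      · rw [AddMonoidHom.comp_assoc, hγ₂β]
        exact AddMonoidHom.ext fun u => rfl
    have e2 : AddMonoidHom.id P = γP := by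
      refine huniqP _ ⟨?_, ?_⟩
      · exact AddMonoidHom.ext fun q => rfl
      · exact AddMonoidHom.ext fun u => rfl
    have e3 : ∀ p : P, ((γ₂ p : P)) = p :=
      fun p => DFunLike.congr_fun (e1.trans e2.symm) p
    intro p
    obtain ⟨q, u, hu, he⟩ := (γ₂ p).2
    exact ⟨q, u, hu, by rw [← e3 p]; exact he⟩
  refine ⟨b1, b2, ?_, ?_⟩
  · rintro q q' ⟨u, hu, he⟩
    have E : c.mk' (q, (0 : P)) = c.mk' (q', u) := by
      calc c.mk' (q, (0 : P)) = γ (h q) := (hγ1 q).symm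
        _ = γ (h q' + u) := by rw [← he]
        _ = γ (h q') + γ u := map_add γ _ _
        _ = c.mk' (q', (0 : P)) + c.mk' ((0 : Q), u) := by rw [hγ1 q', hγ2 u hu]
        _ = c.mk' ((q', (0 : P)) + ((0 : Q), u)) := (map_add c.mk' _ _).symm
        _ = c.mk' (q', u) := by rw [Prod.mk_add_mk, add_zero, zero_add]
    obtain ⟨v, v', hv, hv', e1, _⟩ := c.eq.mp E
    obtain ⟨w, hw⟩ := hv.exists_neg
    refine ⟨v' + w, hv'.add (IsAddUnit.of_add_eq_zero (a := w) v (by rw [add_comm]; exact hw)), ?_⟩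
    calc q = q + 0 := by rw [add_zero]
      _ = q + (v + w) := by rw [hw]
      _ = (q + v) + w := by rw [add_assoc]
      _ = (q' + v') + w := by rw [e1]
      _ = q' + (v' + w) := by rw [add_assoc]
  · refine ⟨S ×ˢ S, fun a b => ?_⟩
    obtain ⟨qa, ua, hua, hae⟩ := b2 a
    obtain ⟨sa, hsa, qa', _, huae⟩ := a2 ua hua
    obtain ⟨qb, ub, hub, hbe⟩ := b2 b
    obtain ⟨sb, hsb, qb', _, hube⟩ := a2 ub hub
    refine ⟨(sa, sb), Finset.mem_product.mpr ⟨hsa, hsb⟩, qb + qb', qa + qa', ?_⟩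
    rw [hae, hbe, huae, hube, map_add, map_add]
    abel

end Aux

/-- for a map `h : Q → P` of fine monoids, conditions (a), (b), (c) are
equivalent. -/
theorem cze_conditions_equivalent
    {Q P : Type} [AddCommMonoid Q] [AddCommMonoid P]
    [AddMonoid.FG Q] [AddMonoid.FG P]
    (hQint : ∀ a b c : Q, a + b = a + c → b = c)
    (hPint : ∀ a b c : P, a + b = a + c → b = c)
    (h : Q →+ P) :
    (CondA h ↔ CondC h) ∧ (CondB h ↔ CondC h) := by
  exact ⟨⟨fun ha => condB_to_condC hQint hPint h (condA_to_condB hQint h ha),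
      condC_to_condA hQint h⟩,
    ⟨condB_to_condC hQint hPint h, condC_to_condB hQint h⟩⟩
end

section
/- Let h : Q → P be a map of fine monoids that is finite (P is finitely generated as a Q-module via h), flat (P is a filtered colimit of free Q-modules), and reduced (the ideal h(Q∖Q*)+P of P is saturated). Then there exists a finite subset S ⊆ P* that is a basis of P as a Q-module. -/
universe u

/-- `h : Q →+ P` is flat if `P`, regarded as a `Q`-module via `h`, is a filtered colimit of
free `Q`-modules.  A `Q`-module is a set with an action of `Q`; it is free if it has a basis
(a subset `S` such that every element is uniquely of the form `q + s`).  The data below is a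
directed system `(M i)` of free `Q`-modules together with an equivariant cocone `c` to `P`
exhibiting `P` as its colimit. -/
def IsFlatHom {Q P : Type u} [AddCommMonoid Q] [AddCommMonoid P] (h : Q →+ P) : Prop :=
  ∃ (ι : Type u) (le : ι → ι → Prop) (M : ι → Type u)
    (act : ∀ i, Q → M i → M i)
    (t : ∀ i j, le i j → M i → M j)
    (c : ∀ i, M i → P),
    Nonempty ι ∧
    -- `le` is a directed preorder (so the system is filtered)
    (∀ i, le i i) ∧
    (∀ i j k, le i j → le j k → le i k) ∧
    (∀ i j, ∃ k, le i k ∧ le j k) ∧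
    -- each `M i` is a `Q`-module ...
    (∀ i (m : M i), act i 0 m = m) ∧
    (∀ i (q q' : Q) (m : M i), act i (q + q') m = act i q (act i q' m)) ∧
    -- ... which is free, i.e. has a basis
    (∀ i, ∃ S : Set (M i), ∀ m : M i, ∃! x : Q × S, m = act i x.1 x.2) ∧
    -- the transition maps are equivariant and functorial
    (∀ i j (hij : le i j) (q : Q) (m : M i), t i j hij (act i q m) = act j q (t i j hij m)) ∧
    (∀ i (hii : le i i) (m : M i), t i i hii m = m) ∧
    (∀ i j k (hij : le i j) (hjk : le j k) (hik : le i k) (m : M i),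
      t j k hjk (t i j hij m) = t i k hik m) ∧
    -- `c` is an equivariant compatible cocone (`P` is a `Q`-module via `h`)
    (∀ i (q : Q) (m : M i), c i (act i q m) = h q + c i m) ∧
    (∀ i j (hij : le i j) (m : M i), c j (t i j hij m) = c i m) ∧
    -- the cocone is colimiting
    (∀ p : P, ∃ i, ∃ m : M i, c i m = p) ∧
    (∀ i j (m : M i) (m' : M j), c i m = c j m' →
      ∃ k, ∃ (hik : le i k) (hjk : le j k), t i k hik m = t j k hjk m')

theorem flat_cancel' {Q P : Type} [AddCommMonoid Q] [AddCommMonoid P]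
    (hQint : ∀ a b c : Q, a + b = a + c → b = c)
    (h : Q →+ P) (hflat : IsFlatHom h) :
    ∀ (q q' : Q) (p : P), h q + p = h q' + p → q = q' := by
  obtain ⟨ι, le, M, act, t, c, -, hrefl, -, -, -, hactadd, hfree, hequiv, hid, hcomp,
    hcact, hct, hsurj, hinj⟩ := hflat
  have tirr : ∀ i k (h1 h2 : le i k) (m : M i), t i k h1 m = t i k h2 m := by
    intro i k h1 h2 m; rfl
  intro q q' p hqq
  obtain ⟨i, m, hm⟩ := hsurj p
  have hc1 : c i (act i q m) = c i (act i q' m) := by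
    rw [hcact, hcact, hm, hqq]
  obtain ⟨k, h1, h2, ht⟩ := hinj i i (act i q m) (act i q' m) hc1
  rw [tirr i k h2 h1] at ht
  rw [hequiv i k h1 q m, hequiv i k h1 q' m] at ht
  set n := t i k h1 m with hn
  obtain ⟨S, hS⟩ := hfree k
  obtain ⟨⟨a, s⟩, has, -⟩ := hS n
  have e1 : act k q n = act k (q + a) s := by rw [hactadd, ← has]
  have e2 : act k q n = act k (q' + a) s := by rw [ht, hactadd, ← has]
  obtain ⟨x, hx, hux⟩ := hS (act k q n)
  have u1 := hux (q + a, s) e1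
  have u2 := hux (q' + a, s) e2
  have : q + a = q' + a := by rw [← u1] at u2; exact (congrArg Prod.fst u2).symm
  exact hQint a q q' (by rw [add_comm a q, add_comm a q', this])

theorem flat_eq' {Q P : Type} [AddCommMonoid Q] [AddCommMonoid P]
    (h : Q →+ P) (hflat : IsFlatHom h) :
    ∀ (q q' : Q) (p p' : P), h q + p = h q' + p' →
      ∃ (a a' : Q) (r : P), p = h a + r ∧ p' = h a' + r ∧ q + a = q' + a' := by
  obtain ⟨ι, le, M, act, t, c, -, hrefl, htrans, hdir, -, hactadd, hfree, hequiv, hid, hcomp,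
    hcact, hct, hsurj, hinj⟩ := hflat
  have tirr : ∀ i k (h1 h2 : le i k) (m : M i), t i k h1 m = t i k h2 m := by
    intro i k h1 h2 m; rfl
  intro q q' p p' hqq
  obtain ⟨i, m, hm⟩ := hsurj p
  obtain ⟨j, m', hm'⟩ := hsurj p'
  obtain ⟨k0, hik0, hjk0⟩ := hdir i j
  set n0 := t i k0 hik0 m with hn0
  set n0' := t j k0 hjk0 m' with hn0'
  have hcn0 : c k0 n0 = p := by rw [hn0, hct, hm]
  have hcn0' : c k0 n0' = p' := by rw [hn0', hct, hm']
  have hc1 : c k0 (act k0 q n0) = c k0 (act k0 q' n0') := by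
    rw [hcact, hcact, hcn0, hcn0', hqq]
  obtain ⟨k, h1, h2, ht⟩ := hinj k0 k0 (act k0 q n0) (act k0 q' n0') hc1
  rw [tirr k0 k h2 h1] at ht
  rw [hequiv k0 k h1 q n0, hequiv k0 k h1 q' n0'] at ht
  set n := t k0 k h1 n0 with hn
  set n' := t k0 k h1 n0' with hn'
  have hcn : c k n = p := by rw [hn, hct, hcn0]
  have hcn' : c k n' = p' := by rw [hn', hct, hcn0']
  obtain ⟨S, hS⟩ := hfree k
  obtain ⟨⟨a, s⟩, has, -⟩ := hS n
  obtain ⟨⟨a', s'⟩, has', -⟩ := hS n'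
  have e1 : act k q n = act k (q + a) s := by rw [hactadd, ← has]
  have e2 : act k q n = act k (q' + a') s' := by rw [ht, hactadd, ← has']
  obtain ⟨x, hx, hux⟩ := hS (act k q n)
  have u1 := hux (q + a, s) e1
  have u2 := hux (q' + a', s') e2
  rw [← u1] at u2
  have hfst : q + a = q' + a' := (congrArg Prod.fst u2).symm
  have hsnd : (s : M k) = (s' : M k) := by
    have := congrArg Prod.snd u2
    exact (congrArg Subtype.val this).symm
  refine ⟨a, a', c k (s : M k), ?_, ?_, hfst⟩
  · rw [← hcn, has]; exact hcact k a s
  · rw [← hcn', has', hsnd]; exact hcact k a' s'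

theorem choose_eq_of_pred_eq {α : Sort*} {p q : α → Prop} (e : p = q)
    (h1 : ∃ x, p x) (h2 : ∃ x, q x) : h1.choose = h2.choose := by
  subst e; rfl

/-- a finite, flat, reduced map `h : Q → P` of fine monoids admits a finite
basis `S ⊆ P*` of `P` as a `Q`-module. -/
theorem finite_flat_reduced_has_unit_basis
    {Q P : Type} [AddCommMonoid Q] [AddCommMonoid P]
    [AddMonoid.FG Q] [AddMonoid.FG P]
    (hQint : ∀ a b c : Q, a + b = a + c → b = c)
    (hPint : ∀ a b c : P, a + b = a + c → b = c)
    (h : Q →+ P)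
    -- `h` is finite: `P` is a finitely generated `Q`-module
    (hfinite : ∃ T : Finset P, ∀ p : P, ∃ t ∈ T, ∃ q : Q, p = h q + t)
    -- `h` is flat
    (hflat : IsFlatHom h)
    -- `h` is reduced: the ideal `h(Q ∖ Q*) + P` of `P` is saturated
    (hreduced : ∀ (x : P) (n : ℕ), 0 < n →
      (∃ q : Q, ¬IsAddUnit q ∧ ∃ y : P, n • x = h q + y) →
      ∃ q : Q, ¬IsAddUnit q ∧ ∃ y : P, x = h q + y) :
    ∃ S : Finset P, (↑S : Set P) ⊆ {x : P | IsAddUnit x} ∧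
      ∀ p : P, ∃! x : Q × P, x.2 ∈ S ∧ p = h x.1 + x.2 := by
  classical
  obtain ⟨T, hT⟩ := hfinite
  have hcan := flat_cancel' hQint h hflat
  have hF := flat_eq' h hflat
  set Rel : P → P → Prop := fun p p' => ∃ q q' : Q, h q + p = h q' + p' with hRel
  have hrefl : ∀ p, Rel p p := fun p => ⟨0, 0, rfl⟩
  have hsymm : ∀ p p', Rel p p' → Rel p' p := by
    rintro p p' ⟨q, q', e⟩; exact ⟨q', q, e.symm⟩
  have htrans : ∀ p p' p'', Rel p p' → Rel p' p'' → Rel p p'' := by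
    rintro p p' p'' ⟨q1, q1', e1⟩ ⟨q2, q2', e2⟩
    refine ⟨q2 + q1, q1' + q2', ?_⟩
    calc h (q2 + q1) + p = h q2 + (h q1 + p) := by rw [map_add, add_assoc]
      _ = h q2 + (h q1' + p') := by rw [e1]
      _ = h q1' + (h q2 + p') := by rw [add_left_comm]
      _ = h q1' + (h q2' + p'') := by rw [e2]
      _ = h (q1' + q2') + p'' := by rw [map_add, add_assoc]
  -- if p' = h a + p then Rel p p'
  have hrel_of : ∀ (a : Q) (p p' : P), p' = h a + p → Rel p p' := by
    intro a p p' e; exact ⟨a, 0, by rw [e, map_zero, zero_add]⟩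
  -- chain lemma: a finite family in one class has common lower bound
  have hchain : ∀ (L : List P) (p0 : P), (∀ x ∈ L, Rel x p0) →
      ∃ r : P, Rel r p0 ∧ ∀ x ∈ L, ∃ a : Q, x = h a + r := by
    intro L
    induction L with
    | nil => exact fun p0 _ => ⟨p0, hrefl p0, by simp⟩
    | cons x L ih =>
      intro p0 hall
      obtain ⟨r', hr'rel, hr'⟩ := ih p0 (fun y hy => hall y (List.mem_cons_of_mem x hy))
      have hxr' : Rel x r' := htrans _ _ _ (hall x List.mem_cons_self) (hsymm _ _ hr'rel)
      obtain ⟨q, q', e⟩ := hxr'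
      obtain ⟨a, a', r, hxa, hr'a, -⟩ := hF q q' x r' e
      refine ⟨r, htrans _ _ _ (hrel_of a' r r' hr'a) hr'rel, ?_⟩
      intro y hy
      rcases List.mem_cons.1 hy with hy | hy
      · exact ⟨a, by rw [hy, hxa]⟩
      · obtain ⟨b, hb⟩ := hr' y hy
        exact ⟨b + a', by rw [map_add, add_assoc, ← hr'a, hb]⟩
  -- the filtered list of generators in the class of t
  set Lf : P → List P := fun t => T.toList.filter (fun t' => decide (Rel t' t)) with hLf
  have hmemLf : ∀ (x t : P), x ∈ Lf t ↔ x ∈ T ∧ Rel x t := by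
    intro x t
    simp only [hLf, List.mem_filter, Finset.mem_toList, decide_eq_true_eq]
  have hf : ∀ t : P, ∃ r : P, ∀ x ∈ Lf t, ∃ a : Q, x = h a + r := by
    intro t
    obtain ⟨r, -, hr⟩ := hchain (Lf t) t (fun x hx => ((hmemLf x t).1 hx).2)
    exact ⟨r, hr⟩
  set f : P → P := fun t => (hf t).choose with hfdef
  have hfspec : ∀ t : P, ∀ x ∈ Lf t, ∃ a : Q, x = h a + f t := fun t => (hf t).choose_spec
  -- the representative is in the class
  have hfRel : ∀ t ∈ T, Rel (f t) t := by
    intro t ht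
    obtain ⟨a, ha⟩ := hfspec t t ((hmemLf t t).2 ⟨ht, hrefl t⟩)
    exact ⟨a, 0, by rw [← ha, map_zero, zero_add]⟩
  -- equal representatives for related generators
  have hfeqT : ∀ t ∈ T, ∀ t' ∈ T, Rel t t' → f t = f t' := by
    intro t ht t' ht' htt'
    have hLeq : Lf t = Lf t' := by
      apply List.filter_congr
      intro x hx
      simp only [decide_eq_decide]
      exact ⟨fun hxt => htrans _ _ _ hxt htt', fun hxt' => htrans _ _ _ hxt' (hsymm _ _ htt')⟩
    exact choose_eq_of_pred_eq (by rw [hLeq]) (hf t) (hf t')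
  -- decomposition of any element
  have hA : ∀ p : P, ∃ t ∈ T, ∃ q : Q, p = h q + f t := by
    intro p
    obtain ⟨t0, ht0, q0, hq0⟩ := hT p
    obtain ⟨a, ha⟩ := hfspec t0 t0 ((hmemLf t0 t0).2 ⟨ht0, hrefl t0⟩)
    exact ⟨t0, ht0, q0 + a, by rw [map_add, add_assoc, ← ha, hq0]⟩
  -- the whole class of f t is reachable from f t
  have hclass : ∀ t ∈ T, ∀ p : P, Rel p (f t) → ∃ a : Q, p = h a + f t := by
    intro t ht p hp
    obtain ⟨t0, ht0, q0, hq0⟩ := hT p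
    have ht0p : Rel t0 p := hrel_of q0 t0 p hq0
    have ht0t : Rel t0 t := htrans _ _ _ (htrans _ _ _ ht0p hp) (hfRel t ht)
    obtain ⟨a, ha⟩ := hfspec t t0 ((hmemLf t0 t).2 ⟨ht0, ht0t⟩)
    exact ⟨q0 + a, by rw [map_add, add_assoc, ← ha, hq0]⟩
  -- representatives are equal if related
  have hfeq : ∀ t ∈ T, ∀ t' ∈ T, Rel (f t) (f t') → f t = f t' := by
    intro t ht t' ht' hrel
    exact hfeqT t ht t' ht' (htrans _ _ _ (htrans _ _ _ (hsymm _ _ (hfRel t ht)) hrel) (hfRel t' ht'))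
  -- representatives are units
  have hE : ∀ t ∈ T, IsAddUnit (f t) := by
    intro t ht
    -- f t is not in the ideal I
    have hnotI : ¬ ∃ q : Q, ¬IsAddUnit q ∧ ∃ y : P, f t = h q + y := by
      rintro ⟨q, hq, y, hy⟩
      apply hq
      have hyrel : Rel y (f t) := hrel_of q y (f t) hy
      obtain ⟨a, ha⟩ := hclass t ht y hyrel
      have : h (q + a) + f t = h 0 + f t := by
        rw [map_add, add_assoc, ← ha, ← hy, map_zero, zero_add]
      have hqa : q + a = 0 := hcan _ _ _ this
      exact IsAddUnit.of_add_eq_zero (a := q) a hqa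
    -- pigeonhole on multiples of f t
    have hdec : ∀ n : ℕ, ∃ t' : P, t' ∈ T ∧ ∃ q : Q, n • f t = h q + f t' := by
      intro n
      obtain ⟨t', ht', q, hq⟩ := hA (n • f t)
      exact ⟨t', ht', q, hq⟩
    choose tt htt qq hqq using hdec
    set S0 : Finset P := T.image f with hS0
    have hmaps : ∀ n ∈ Finset.range (S0.card + 1), f (tt n) ∈ S0 := by
      intro n _
      exact Finset.mem_image_of_mem f (htt n)
    have hcard : S0.card < (Finset.range (S0.card + 1)).card := by
      rw [Finset.card_range]; omega
    obtain ⟨m, -, n, -, hmn, heq⟩ :=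
      Finset.exists_ne_map_eq_of_card_lt_of_maps_to hcard hmaps
    -- wlog m < n
    have key : ∀ m n : ℕ, m < n → f (tt m) = f (tt n) → IsAddUnit (f t) := by
      clear hmn heq m n
      intro m n hmn heq
      -- n • f t = h (qq n) + d,  m • f t = h (qq m) + d where d = f (tt m)
      have e1 : n • f t = h (qq n) + f (tt m) := by rw [hqq n, heq]
      have e2 : m • f t = h (qq m) + f (tt m) := hqq m
      have e3 : n • f t = (n - m) • f t + m • f t := by
        rw [← add_nsmul, Nat.sub_add_cancel hmn.le]
      have e4 : h (qq n) + f (tt m) = ((n - m) • f t + h (qq m)) + f (tt m) := by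
        rw [add_assoc, ← e2, ← e3, e1]
      have e5 : h (qq n) = (n - m) • f t + h (qq m) := by
        apply hPint (f (tt m))
        rw [add_comm (f (tt m)) (h (qq n)), add_comm (f (tt m)) _, e4]
      have e6 : h (qq n) + (0 : P) = h (qq m) + (n - m) • f t := by
        rw [add_zero, e5, add_comm]
      obtain ⟨a, a', w, hw0, hksm, -⟩ := hF (qq n) (qq m) 0 ((n - m) • f t) e6
      by_cases hu : IsAddUnit a'
      · -- then (n-m) • f t is a unit, hence f t is
        have hwunit : IsAddUnit w := IsAddUnit.of_add_eq_zero (a := w) (h a) (by rw [add_comm, ← hw0])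
        have hsum : IsAddUnit ((n - m) • f t) := by
          rw [hksm]; exact (hu.map h).add hwunit
        have hk : n - m = (n - m - 1) + 1 := by omega
        rw [hk, succ_nsmul] at hsum
        exact isAddUnit_of_add_isAddUnit_right hsum
      · exfalso
        apply hnotI
        exact hreduced (f t) (n - m) (by omega) ⟨a', hu, w, hksm⟩
    rcases lt_or_gt_of_ne hmn with hlt | hgt
    · exact key m n hlt heq
    · exact key n m hgt heq.symm
  -- assemble
  refine ⟨T.image f, ?_, ?_⟩
  · intro x hx
    simp only [Finset.coe_image, Set.mem_image, Finset.mem_coe] at hx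
    obtain ⟨t, ht, rfl⟩ := hx
    exact hE t ht
  · intro p
    obtain ⟨t0, ht0, q0, hq0⟩ := hA p
    refine ⟨(q0, f t0), ⟨Finset.mem_image_of_mem f ht0, hq0⟩, ?_⟩
    rintro ⟨q', s'⟩ ⟨hs', hp'⟩
    simp only [Finset.mem_image] at hs'
    obtain ⟨t', ht', rfl⟩ := hs'
    have hrel : Rel (f t') (f t0) := ⟨q', q0, by rw [← hp', ← hq0]⟩
    have hse : f t' = f t0 := hfeq t' ht' t0 ht0 hrel
    have hqe : q' = q0 := by
      apply hcan q' q0 (f t0)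
      rw [← hse, ← hp', hq0, hse]
    exact Prod.ext hqe hse
end

section
/- Let h : Q → P be an injective map of fine monoids. The following are equivalent: (1) h is dense, i.e., for every p ∈ P there exist n > 0 and q ∈ Q with n·p = h(q); (2) P is finitely generated as a Q-module via h; (3) P is finitely generated as a Q-module and the induced map Spec P → Spec Q on faces (sending a face F of P to h⁻¹(F)) is bijective. -/
open AddSubmonoid in
/-- Every element of the closure of a finset is a sum of multiples of the generators. -/
lemma exists_rep {M : Type*} [AddCommMonoid M] (S : Finset M) {x : M}
    (hx : x ∈ AddSubmonoid.closure (S : Set M)) :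
    ∃ r : M → ℕ, x = ∑ s ∈ S, r s • s := by
  classical
  induction hx using AddSubmonoid.closure_induction with
  | mem s hs =>
    refine ⟨fun a => if a = s then 1 else 0, ?_⟩
    rw [Finset.sum_congr rfl (g := fun a => if a = s then s else 0)
      (fun a _ => by by_cases h : a = s <;> simp [h])]
    simp [Finset.sum_ite_eq' S s (fun a => a), hs, Finset.mem_coe.mp hs]
  | zero => exact ⟨fun _ => 0, by simp⟩
  | add a b _ _ ha hb =>
    obtain ⟨r, hr⟩ := ha; obtain ⟨r', hr'⟩ := hb
    exact ⟨r + r', by simp [hr, hr', add_smul, Finset.sum_add_distrib]⟩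

lemma face_nsmul_mem {M : Type*} [AddCommMonoid M] {F : Set M} (hF : IsFace F)
    {x : M} (hx : x ∈ F) (n : ℕ) : n • x ∈ F := by
  induction n with
  | zero => simpa using hF.1
  | succ k ih => rw [succ_nsmul]; exact hF.2.1 _ _ ih hx

lemma face_of_nsmul_mem {M : Type*} [AddCommMonoid M] {F : Set M} (hF : IsFace F)
    {x : M} {n : ℕ} (hn : 0 < n) (hx : n • x ∈ F) : x ∈ F := by
  obtain ⟨k, rfl⟩ := Nat.exists_eq_succ_of_ne_zero hn.ne'
  rw [succ_nsmul] at hx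
  exact (hF.2.2 _ _ hx).2

/-- Dickson-type lemma: any sequence in a finitely generated commutative monoid has
`m < n` with `f m` dividing `f n`. -/
lemma exists_lt_add {M : Type*} [AddCommMonoid M] [AddMonoid.FG M] (f : ℕ → M) :
    ∃ m n : ℕ, m < n ∧ ∃ r : M, f n = f m + r := by
  classical
  obtain ⟨S, hS⟩ := (AddMonoid.fg_def.mp ‹_› : (⊤ : AddSubmonoid M).FG)
  have hrep : ∀ k, ∃ r : M → ℕ, f k = ∑ s ∈ S, r s • s := fun k =>
    exists_rep S (hS ▸ AddSubmonoid.mem_top (f k))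
  choose r hr using hrep
  have hwo : IsWellOrder ℕ (· < ·) := by infer_instance
  obtain ⟨m, n, hmn, hle⟩ := (Set.IsPWO.pi (s := fun (_ : ↥S) => (Set.univ : Set ℕ)) (fun _ => Set.isPWO_univ_iff.mpr inferInstance)).exists_lt
    (f := fun k (s : ↥S) => r k s.1) (fun _ _ _ => Set.mem_univ _)
  refine ⟨m, n, hmn, ∑ s ∈ S.attach, (r n s.1 - r m s.1) • s.1, ?_⟩
  rw [hr n, hr m, ← Finset.sum_attach S (fun s => r n s • s),
    ← Finset.sum_attach S (fun s => r m s • s), ← Finset.sum_add_distrib]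
  refine Finset.sum_congr rfl fun s _ => ?_
  rw [← add_smul, Nat.add_sub_cancel' (hle s)]

lemma dense_to_fg {Q P : Type*} [AddCommMonoid Q] [AddCommMonoid P] [AddMonoid.FG P]
    (h : Q →+ P) (hd : ∀ p : P, ∃ n : ℕ, 0 < n ∧ ∃ q : Q, n • p = h q) :
    ∃ T : Finset P, ∀ p : P, ∃ t ∈ T, ∃ q : Q, p = h q + t := by
  classical
  obtain ⟨S, hS⟩ := (AddMonoid.fg_def.mp ‹_› : (⊤ : AddSubmonoid P).FG)
  choose n hn q hq using hd
  refine ⟨(S.pi fun s => Finset.range (n s)).image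
      fun f => ∑ s ∈ S.attach, f s.1 s.2 • s.1, fun p => ?_⟩
  obtain ⟨r, hr⟩ := exists_rep S (hS ▸ AddSubmonoid.mem_top p)
  refine ⟨∑ s ∈ S, (r s % n s) • s, Finset.mem_image.mpr
    ⟨fun a _ => r a % n a,
      Finset.mem_pi.mpr fun a _ => Finset.mem_range.mpr (Nat.mod_lt _ (hn a)),
      Finset.sum_attach S fun s => (r s % n s) • s⟩,
    ∑ s ∈ S, (r s / n s) • q s, ?_⟩
  rw [hr, map_sum, ← Finset.sum_add_distrib]
  refine Finset.sum_congr rfl fun s _ => ?_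
  rw [map_nsmul, ← hq s, smul_smul, ← add_nsmul, Nat.div_add_mod']

lemma fg_to_dense {Q P : Type*} [AddCommMonoid Q] [AddCommMonoid P] [AddMonoid.FG Q]
    (hPint : ∀ a b c : P, a + b = a + c → b = c) (h : Q →+ P)
    (hfg : ∃ T : Finset P, ∀ p : P, ∃ t ∈ T, ∃ q : Q, p = h q + t) :
    ∀ p : P, ∃ n : ℕ, 0 < n ∧ ∃ q : Q, n • p = h q := by
  classical
  obtain ⟨T, hT⟩ := hfg
  intro p
  choose t ht q hq using fun k : ℕ => hT ((k + 1) • p)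
  obtain ⟨y, hy⟩ := Finite.exists_infinite_fiber (fun k : ℕ => (⟨t k, ht k⟩ : ↥T))
  have hinf : (setOf fun k : ℕ => (⟨t k, ht k⟩ : ↥T) = y).Infinite := by
    rw [← Set.infinite_coe_iff]
    convert hy using 2
    rfl
  set u : ℕ → ℕ := Nat.nth (fun k : ℕ => (⟨t k, ht k⟩ : ↥T) = y) with hu
  have humem : ∀ i, t (u i) = (y : P) := fun i => by
    have := Nat.nth_mem_of_infinite hinf i
    exact congrArg Subtype.val this
  obtain ⟨m, n, hmn, r, hrel⟩ := exists_lt_add (fun i => q (u i))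
  have hab : u m < u n := (Nat.nth_lt_nth hinf).mpr hmn
  refine ⟨u n - u m, Nat.sub_pos_of_lt hab, r, ?_⟩
  have e1 : (u n + 1) • p = h r + (u m + 1) • p := by
    rw [hq (u n), hrel, map_add, humem, ← humem m, add_comm (h (q (u m))),
      add_assoc, ← hq (u m)]
  have e2 : (u n + 1) • p = (u m + 1) • p + (u n - u m) • p := by
    rw [← add_nsmul]
    congr 1
    omega
  rw [e2, add_comm (h r)] at e1
  exact hPint _ _ _ e1

lemma spec_inj {Q P : Type*} [AddCommMonoid Q] [AddCommMonoid P] (h : Q →+ P)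
    (hd : ∀ p : P, ∃ n : ℕ, 0 < n ∧ ∃ q : Q, n • p = h q)
    {F F' : Set P} (hF : IsFace F) (hF' : IsFace F')
    (he : ⇑h ⁻¹' F = ⇑h ⁻¹' F') : F = F' := by
  have key : ∀ (F : Set P), IsFace F → ∀ p : P,
      (p ∈ F ↔ ∃ n : ℕ, 0 < n ∧ ∃ q : Q, n • p = h q ∧ h q ∈ F) := by
    intro F hF p
    constructor
    · intro hp
      obtain ⟨n, hn, q, hq⟩ := hd p
      exact ⟨n, hn, q, hq, hq ▸ face_nsmul_mem hF hp n⟩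
    · rintro ⟨n, hn, q, hq, hqF⟩
      exact face_of_nsmul_mem hF hn (hq ▸ hqF)
  ext p
  rw [key F hF p, key F' hF' p]
  constructor <;> rintro ⟨n, hn, q, hq, hqF⟩
  · exact ⟨n, hn, q, hq, by have : q ∈ ⇑h ⁻¹' F := hqF; rwa [he] at this⟩
  · exact ⟨n, hn, q, hq, by have : q ∈ ⇑h ⁻¹' F' := hqF; rwa [← he] at this⟩

lemma spec_surj {Q P : Type*} [AddCommMonoid Q] [AddCommMonoid P] (h : Q →+ P)
    (hinj : Function.Injective h)
    (hd : ∀ p : P, ∃ n : ℕ, 0 < n ∧ ∃ q : Q, n • p = h q)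
    {G : Set Q} (hG : IsFace G) : ∃ F : Set P, IsFace F ∧ ⇑h ⁻¹' F = G := by
  refine ⟨{p : P | ∃ n : ℕ, 0 < n ∧ ∃ q : Q, n • p = h q ∧ q ∈ G}, ⟨?_, ?_, ?_⟩, ?_⟩
  · exact ⟨1, one_pos, 0, by simp, hG.1⟩
  · rintro p p' ⟨n, hn, q, hq, hqG⟩ ⟨n', hn', q', hq', hq'G⟩
    refine ⟨n * n', Nat.mul_pos hn hn', n' • q + n • q', ?_,
      hG.2.1 _ _ (face_nsmul_mem hG hqG n') (face_nsmul_mem hG hq'G n)⟩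
    rw [smul_add, map_add, map_nsmul, map_nsmul, ← hq, ← hq', smul_smul, smul_smul,
      mul_comm n' n]
  · rintro p p' ⟨n, hn, q, hq, hqG⟩
    obtain ⟨a, ha, q1, hq1⟩ := hd (n • p)
    obtain ⟨b, hb, q2, hq2⟩ := hd (n • p')
    have key : b • q1 + a • q2 = (a * b) • q := by
      apply hinj
      rw [map_add, map_nsmul, map_nsmul, map_nsmul, ← hq1, ← hq2, ← hq]
      simp only [smul_add, smul_smul]
      congr 1 <;> congr 1 <;> ring
    have hsum : b • q1 + a • q2 ∈ G := key ▸ face_nsmul_mem hG hqG (a * b)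
    obtain ⟨h1, h2⟩ := hG.2.2 _ _ hsum
    constructor
    · exact ⟨a * n, Nat.mul_pos ha hn, q1,
        by rw [← smul_smul]; exact hq1, face_of_nsmul_mem hG hb h1⟩
    · exact ⟨b * n, Nat.mul_pos hb hn, q2,
        by rw [← smul_smul]; exact hq2, face_of_nsmul_mem hG ha h2⟩
  · ext q0
    simp only [Set.mem_preimage, Set.mem_setOf_eq]
    constructor
    · rintro ⟨n, hn, q, hq, hqG⟩
      rw [← map_nsmul] at hq
      exact face_of_nsmul_mem hG hn (hinj hq ▸ hqG)
    · intro hq0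
      exact ⟨1, one_pos, q0, one_nsmul _, hq0⟩

/-- for an injective map `h : Q → P` of fine monoids the following are
equivalent: (1) `h` is dense; (2) `P` is a finitely generated `Q`-module;
(3) `P` is a finitely generated `Q`-module and the map `Spec P → Spec Q` on faces,
`F ↦ h⁻¹(F)`, is bijective. -/
theorem dense_iff_finite_iff_finite_and_spec_bijective
    {Q P : Type*} [AddCommMonoid Q] [AddCommMonoid P]
    [AddMonoid.FG Q] [AddMonoid.FG P]
    (hQint : ∀ a b c : Q, a + b = a + c → b = c)
    (hPint : ∀ a b c : P, a + b = a + c → b = c)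
    (h : Q →+ P) (hinj : Function.Injective h) :
    ((∀ p : P, ∃ n : ℕ, 0 < n ∧ ∃ q : Q, n • p = h q) ↔
      (∃ T : Finset P, ∀ p : P, ∃ t ∈ T, ∃ q : Q, p = h q + t)) ∧
    ((∃ T : Finset P, ∀ p : P, ∃ t ∈ T, ∃ q : Q, p = h q + t) ↔
      ((∃ T : Finset P, ∀ p : P, ∃ t ∈ T, ∃ q : Q, p = h q + t) ∧
        (∀ F F' : Set P, IsFace F → IsFace F' → ⇑h ⁻¹' F = ⇑h ⁻¹' F' → F = F') ∧
        ∀ G : Set Q, IsFace G → ∃ F : Set P, IsFace F ∧ ⇑h ⁻¹' F = G)) := by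
  have iff1 : (∀ p : P, ∃ n : ℕ, 0 < n ∧ ∃ q : Q, n • p = h q) ↔
      (∃ T : Finset P, ∀ p : P, ∃ t ∈ T, ∃ q : Q, p = h q + t) :=
    ⟨fun hd => dense_to_fg h hd, fun hfg => fg_to_dense hPint h hfg⟩
  refine ⟨iff1, ?_, fun hh => hh.1⟩
  intro hfg
  have hd := iff1.mpr hfg
  exact ⟨hfg, fun F F' hF hF' he => spec_inj h hd hF hF' he,
    fun G hG => spec_surj h hinj hd hG⟩
end

section
/- Let h : Q → P be a flat and local map of finitely generated commutative monoids. Then the induced map Spec h : Spec P → Spec Q on faces is surjective, and h is injective. -/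
universe u

/-- a flat, local map `h : Q → P` of finitely generated commutative monoids is
faithfully flat, i.e. the induced map on faces `Spec h : Spec P → Spec Q`, `F ↦ h⁻¹(F)`, is
surjective; moreover `h` is injective. -/
theorem flat_local_spec_surjective_and_injective
    {Q P : Type} [AddCommMonoid Q] [AddCommMonoid P]
    [AddMonoid.FG Q] [AddMonoid.FG P]
    (h : Q →+ P) (hflat : IsFlatHom h)
    (hlocal : ∀ q : Q, IsAddUnit (h q) → IsAddUnit q) :
    (∀ G : Set Q, IsFace G → ∃ F : Set P, IsFace F ∧ ⇑h ⁻¹' F = G) ∧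
      Function.Injective h := by
  obtain ⟨ι, le, M, act, t, c, ⟨i₀⟩, hrefl, htrans, hdir, hact0, hactadd, hfree,
    hteq, -, -, hceq, hct, hsurjc, hcoeq⟩ := hflat
  constructor
  · intro G hG
    refine ⟨{p : P | ∃ p' g, g ∈ G ∧ p + p' = h g}, ⟨⟨0, 0, hG.1, by simp⟩, ?_, ?_⟩, ?_⟩
    · rintro a b ⟨a', ga, hga, ha⟩ ⟨b', gb, hgb, hb⟩
      exact ⟨a' + b', ga + gb, hG.2.1 _ _ hga hgb, by rw [map_add, ← ha, ← hb]; abel⟩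
    · rintro a b ⟨p', g, hg, hab⟩
      exact ⟨⟨b + p', g, hg, by rw [← hab]; abel⟩, ⟨a + p', g, hg, by rw [← hab]; abel⟩⟩
    · ext q
      simp only [Set.mem_preimage, Set.mem_setOf_eq]
      constructor
      · rintro ⟨p', g, hg, hq⟩
        obtain ⟨i, m, hm⟩ := hsurjc p'
        obtain ⟨j, m₀, hm₀⟩ := hsurjc (0 : P)
        have hc1 : c i (act i q m) = c j (act j g m₀) := by
          rw [hceq, hceq, hm, hm₀, add_zero, hq]
        obtain ⟨k, hik, hjk, hk⟩ := hcoeq _ _ _ _ hc1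
        rw [hteq, hteq] at hk
        obtain ⟨S, hS⟩ := hfree k
        obtain ⟨⟨a, s₁⟩, hrep1, -⟩ := hS (t i k hik m)
        obtain ⟨⟨b, s₂⟩, hrep2, -⟩ := hS (t j k hjk m₀)
        have h1 : act k q (t i k hik m) = act k (q + a) s₁.1 := by
          rw [hrep1]; exact (hactadd k q a s₁.1).symm
        have h2 : act k g (t j k hjk m₀) = act k (g + b) s₂.1 := by
          rw [hrep2]; exact (hactadd k g b s₂.1).symm
        obtain ⟨x, -, hux⟩ := hS (act k q (t i k hik m))
        have e1 : ((q + a, s₁) : Q × S) = x := hux (q + a, s₁) h1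
        have e2 : ((g + b, s₂) : Q × S) = x := hux (g + b, s₂) (hk.trans h2)
        have key : q + a = g + b := congrArg Prod.fst (e1.trans e2.symm)
        have hbu : IsAddUnit b := by
          apply hlocal
          have h0 : c k (t j k hjk m₀) = 0 := by rw [hct, hm₀]
          rw [hrep2, hceq] at h0
          exact IsAddUnit.of_add_eq_zero _ h0
        obtain ⟨b', hb'⟩ := hbu.exists_neg
        have hqg : q + (a + b') = g := by
          rw [← add_assoc, key, add_assoc, hb', add_zero]
        exact (hG.2.2 q (a + b') (by rwa [hqg])).1
      · intro hq
        exact ⟨0, q, hq, by simp⟩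
  · intro q₁ q₂ hq
    obtain ⟨i, m₀, hm₀⟩ := hsurjc (0 : P)
    have hc1 : c i (act i q₁ m₀) = c i (act i q₂ m₀) := by
      rw [hceq, hceq, hm₀, add_zero, add_zero]; exact hq
    obtain ⟨k, hik, hjk, hk⟩ := hcoeq _ _ _ _ hc1
    rw [hteq, hteq] at hk
    have hpr : t i k hjk m₀ = t i k hik m₀ := rfl
    rw [hpr] at hk
    obtain ⟨S, hS⟩ := hfree k
    obtain ⟨⟨b, s⟩, hrep, -⟩ := hS (t i k hik m₀)
    have h1 : act k q₁ (t i k hik m₀) = act k (q₁ + b) s.1 := by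
      rw [hrep]; exact (hactadd k q₁ b s.1).symm
    have h2 : act k q₂ (t i k hik m₀) = act k (q₂ + b) s.1 := by
      rw [hrep]; exact (hactadd k q₂ b s.1).symm
    obtain ⟨x, -, hux⟩ := hS (act k q₁ (t i k hik m₀))
    have e1 : ((q₁ + b, s) : Q × S) = x := hux (q₁ + b, s) h1
    have e2 : ((q₂ + b, s) : Q × S) = x := hux (q₂ + b, s) (hk.trans h2)
    have key : q₁ + b = q₂ + b := congrArg Prod.fst (e1.trans e2.symm)
    have hbu : IsAddUnit b := by
      apply hlocal
      have h0 : c k (t i k hik m₀) = 0 := by rw [hct, hm₀]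
      rw [hrep, hceq] at h0
      exact IsAddUnit.of_add_eq_zero _ h0
    obtain ⟨b', hb'⟩ := hbu.exists_neg
    calc q₁ = q₁ + (b + b') := by rw [hb', add_zero]
      _ = (q₁ + b) + b' := by rw [add_assoc]
      _ = (q₂ + b) + b' := by rw [key]
      _ = q₂ := by rw [add_assoc, hb', add_zero]
end

section
/- Let h : Q → P be a faithfully flat map of commutative monoids (flat, and surjective on Spec, i.e., every face of Q is the preimage of a face of P). Then the diagram Q → P ⇉ P ⊕_Q P, where the two maps send p to (p,0) and (0,p) respectively in the pushout P ⊕_Q P of P ← Q → P, is an equalizer diagram of monoids. In particular h is injective. -/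
universe u

/-- An explicit additive congruence on `P × P` containing the pushout relations
`(h q + p, p') ~ (p, h q + p')`. -/
def pushCon {Q P : Type} [AddCommMonoid Q] [AddCommMonoid P] (h : Q →+ P) : AddCon (P × P) where
  r x y := ∃ q q' : Q, x.1 + h q = y.1 + h q' ∧ x.2 + h q' = y.2 + h q
  iseqv := by
    constructor
    · exact fun x => ⟨0, 0, rfl, rfl⟩
    · rintro x y ⟨q, q', h1, h2⟩
      exact ⟨q', q, h1.symm, h2.symm⟩
    · rintro x y z ⟨q, q', h1, h2⟩ ⟨r, r', h3, h4⟩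
      refine ⟨q + r, q' + r', ?_, ?_⟩
      · calc x.1 + h (q + r) = x.1 + h q + h r := by rw [map_add, add_assoc]
          _ = y.1 + h q' + h r := by rw [h1]
          _ = y.1 + h r + h q' := by rw [add_right_comm]
          _ = z.1 + h r' + h q' := by rw [h3]
          _ = z.1 + h (q' + r') := by rw [map_add, add_right_comm, add_assoc]
      · calc x.2 + h (q' + r') = x.2 + h q' + h r' := by rw [map_add, add_assoc]
          _ = y.2 + h q + h r' := by rw [h2]
          _ = y.2 + h r' + h q := by rw [add_right_comm]
          _ = z.2 + h r + h q := by rw [h4]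
          _ = z.2 + h (q + r) := by rw [map_add, add_right_comm, add_assoc]
  add' := by
    rintro w x y z ⟨q, q', h1, h2⟩ ⟨r, r', h3, h4⟩
    refine ⟨q + r, q' + r', ?_, ?_⟩
    · calc (w + y).1 + h (q + r) = (w.1 + h q) + (y.1 + h r) := by
            rw [Prod.fst_add, map_add]; abel
        _ = (x.1 + h q') + (z.1 + h r') := by rw [h1, h3]
        _ = (x + z).1 + h (q' + r') := by rw [Prod.fst_add, map_add]; abel
    · calc (w + y).2 + h (q' + r') = (w.2 + h q') + (y.2 + h r') := by
            rw [Prod.snd_add, map_add]; abel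
        _ = (x.2 + h q) + (z.2 + h r) := by rw [h2, h4]
        _ = (x + z).2 + h (q + r) := by rw [Prod.snd_add, map_add]; abel

/-- The key consequences of faithful flatness: injectivity, and the fact that
`p + h q = h q'` forces `p` to lie in the image of `h`. -/
theorem key_flat {Q P : Type} [AddCommMonoid Q] [AddCommMonoid P] (h : Q →+ P)
    (hflat : IsFlatHom h)
    (hspec : ∀ G : Set Q, IsFace G → ∃ F : Set P, IsFace F ∧ ⇑h ⁻¹' F = G) :
    Function.Injective h ∧ ∀ (p : P) (q q' : Q), p + h q = h q' → p ∈ Set.range h := by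
  -- the face of units of `Q` and the corresponding face of `P`
  have hGface : IsFace {q : Q | ∃ r, q + r = 0} := by
    refine ⟨⟨0, add_zero 0⟩, ?_, ?_⟩
    · rintro a b ⟨a', ha⟩ ⟨b', hb⟩
      exact ⟨a' + b', by rw [add_add_add_comm, ha, hb, add_zero]⟩
    · rintro a b ⟨r, hr⟩
      exact ⟨⟨b + r, by rw [← add_assoc]; exact hr⟩,
        ⟨a + r, by rw [add_left_comm, ← add_assoc]; exact hr⟩⟩
  obtain ⟨F, hF, hFG⟩ := hspec _ hGface
  have hunit : ∀ (b : Q) (w : P), h b + w = 0 → ∃ b', b + b' = 0 := by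
    intro b w hbw
    have h0F : (0 : P) ∈ F := hF.1
    have hmem : h b + w ∈ F := by rw [hbw]; exact h0F
    have hbF : h b ∈ F := (hF.2.2 _ _ hmem).1
    have : b ∈ (⇑h ⁻¹' F) := hbF
    rw [hFG] at this
    exact this
  obtain ⟨ι, le, M, act, t, c, -, -, -, -, -, hactadd, hfree, hequiv, -, -,
    hceq, hct, hsurj, hcinj⟩ := hflat
  constructor
  · -- injectivity
    intro q q' hqq'
    obtain ⟨j, m0, hm0⟩ := hsurj 0
    have hc : c j (act j q m0) = c j (act j q' m0) := by
      rw [hceq, hceq, hm0, hqq']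
    obtain ⟨k, hjk, hjk', e⟩ := hcinj j j _ _ hc
    rw [hequiv, hequiv] at e
    obtain ⟨S, hS⟩ := hfree k
    obtain ⟨⟨a, s⟩, hx, -⟩ := hS (t j k hjk m0)
    have e2 : act k (q + a) ↑s = act k (q' + a) ↑s := by
      rw [hactadd, hactadd, ← hx]
      exact e
    obtain ⟨w, -, hw⟩ := hS (act k (q + a) ↑s)
    have hpair : (⟨q + a, s⟩ : Q × S) = ⟨q' + a, s⟩ :=
      (hw ⟨q + a, s⟩ rfl).trans (hw ⟨q' + a, s⟩ e2).symm
    have hqa : q + a = q' + a := congrArg Prod.fst hpair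
    have hcx : h a + c k ↑s = 0 := by
      rw [← hceq, ← hx, hct, hm0]
    obtain ⟨a', ha'⟩ := hunit a _ hcx
    calc q = q + a + a' := by rw [add_assoc, ha', add_zero]
      _ = q' + a + a' := by rw [hqa]
      _ = q' := by rw [add_assoc, ha', add_zero]
  · -- p + h q = h q' forces p ∈ range h
    intro p q q' hpq
    obtain ⟨i, m, hm⟩ := hsurj p
    obtain ⟨j, m0, hm0⟩ := hsurj 0
    have hc : c i (act i q m) = c j (act j q' m0) := by
      rw [hceq, hceq, hm, hm0, add_zero, ← hpq, add_comm]
    obtain ⟨k, hik, hjk, e⟩ := hcinj i j _ _ hc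
    rw [hequiv, hequiv] at e
    obtain ⟨S, hS⟩ := hfree k
    obtain ⟨⟨a, s⟩, hx, -⟩ := hS (t i k hik m)
    obtain ⟨⟨b, u⟩, hy, -⟩ := hS (t j k hjk m0)
    have e2 : act k (q + a) ↑s = act k (q' + b) ↑u := by
      rw [hactadd, hactadd, ← hx, ← hy]
      exact e
    obtain ⟨w, -, hw⟩ := hS (act k (q + a) ↑s)
    have hpair : (⟨q + a, s⟩ : Q × S) = ⟨q' + b, u⟩ :=
      (hw ⟨q + a, s⟩ rfl).trans (hw ⟨q' + b, u⟩ e2).symm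
    have hsu : (s : M k) = ↑u := congrArg Subtype.val (congrArg Prod.snd hpair)
    have hp : p = h a + c k ↑s := by
      rw [← hm, ← hct i k hik m, hx, hceq]
    have h0 : h b + c k ↑u = 0 := by
      rw [← hceq, ← hy, hct, hm0]
    obtain ⟨b', hb'⟩ := hunit b _ h0
    have hcu : c k ↑u = h b' := by
      calc c k ↑u = c k ↑u + (h b + h b') := by rw [← map_add, hb', map_zero, add_zero]
        _ = (h b + c k ↑u) + h b' := by rw [← add_assoc, add_comm (c k ↑u) (h b)]
        _ = 0 + h b' := by rw [h0]
        _ = h b' := zero_add _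
    have hcs : c k ↑s = c k ↑u := congrArg (c k) hsu
    exact ⟨a + b', by rw [map_add, ← hcu, ← hcs, ← hp]⟩

/-- if `h : Q → P` is faithfully flat (flat, and every face of `Q` is the
preimage of a face of `P`), then `Q → P ⇉ P ⊕_Q P` is an equalizer diagram: for any pushout
`(N, i₁, i₂)` of `P ← Q → P`, the map `h` is injective and the set of `p` with
`i₁ p = i₂ p` is exactly the image of `Q`. -/
theorem faithfully_flat_equalizer
    {Q P : Type} [AddCommMonoid Q] [AddCommMonoid P]
    (h : Q →+ P) (hflat : IsFlatHom h)
    (hspec : ∀ G : Set Q, IsFace G → ∃ F : Set P, IsFace F ∧ ⇑h ⁻¹' F = G) :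
    ∀ (N : Type) [AddCommMonoid N] (i₁ i₂ : P →+ N),
      i₁.comp h = i₂.comp h →
      (∀ (T : Type) [AddCommMonoid T] (f₁ f₂ : P →+ T), f₁.comp h = f₂.comp h →
        ∃! φ : N →+ T, φ.comp i₁ = f₁ ∧ φ.comp i₂ = f₂) →
      Function.Injective h ∧ ∀ p : P, i₁ p = i₂ p ↔ p ∈ Set.range h := by
  obtain ⟨hinj, hkey⟩ := key_flat h hflat hspec
  intro N _ i₁ i₂ heq hpush
  refine ⟨hinj, fun p => ⟨?_, ?_⟩⟩
  · intro hip
    have hcompat : ((pushCon h).mk'.comp (AddMonoidHom.inl P P)).comp h =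
        ((pushCon h).mk'.comp (AddMonoidHom.inr P P)).comp h := by
      ext q
      have hrel : (pushCon h) (h q, 0) (0, h q) := ⟨0, q, by simp, by simp⟩
      simpa using hrel
    obtain ⟨φ, ⟨hφ1, hφ2⟩, -⟩ := hpush (pushCon h).Quotient
      ((pushCon h).mk'.comp (AddMonoidHom.inl P P))
      ((pushCon h).mk'.comp (AddMonoidHom.inr P P)) hcompat
    have h1 : ((pushCon h).mk'.comp (AddMonoidHom.inl P P)) p =
        ((pushCon h).mk'.comp (AddMonoidHom.inr P P)) p := by
      rw [← hφ1, ← hφ2]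
      simp [hip]
    have hrel : (pushCon h) (p, 0) (0, p) := by simpa using h1
    have hrel2 : ∃ q q' : Q, p + h q = 0 + h q' ∧ (0 : P) + h q' = p + h q := hrel
    obtain ⟨q, q', e1, e2⟩ := hrel2
    simp only [zero_add] at e1
    exact hkey p q q' e1
  · rintro ⟨q, rfl⟩
    exact DFunLike.congr_fun heq q
end
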